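/- arXiv:2402.12870 — 7 statements merged into one kernel-verified Lean document; each statement's English description precedes it below -/
import Mathlib

section
/- Let Ω ⊆ ℝ^N be a bounded open set. For each n let (y_n, D_n, f_n) be an admissible deformation triple on Ω, and let (y, D, f) be an admissible deformation triple on Ω. Assume that y_n → y almost everywhere in Ω and that the sequence x ↦ det(f_n x) converges weakly in L¹(Ω) to x ↦ det(f x). Then for every measurable set E ⊆ Ω one has volume((y_n(E ∩ D_n)) Δ (y(E ∩ D))) → 0 as n → ∞; that is, the indicator functions of the geometric images im_G(y_n, E) = y_n(E ∩ D_n) converge in L¹(ℝ^N) to the indicator function of im_G(y, E) = y(E ∩ D). -/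
open MeasureTheory Filter Topology Set
open scoped ENNReal NNReal

noncomputable section

abbrev Euc (N : ℕ) := EuclideanSpace ℝ (Fin N)

/-- An a.e. approximately differentiable map on `A`, encoded as a triple `(u, D, f)`. -/
def ApproxDiffTriple {N : ℕ} (A D : Set (Euc N)) (u : Euc N → Euc N)
    (f : Euc N → Euc N →L[ℝ] Euc N) : Prop :=
  MeasurableSet D ∧ D ⊆ A ∧ volume (A \ D) = 0 ∧ ∀ x ∈ D, HasFDerivWithinAt u (f x) D x

/-- An admissible deformation on `Ω` (the class `𝒴(Ω)` of the paper). -/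
def AdmissibleDef {N : ℕ} (Ω D : Set (Euc N)) (y : Euc N → Euc N)
    (f : Euc N → Euc N →L[ℝ] Euc N) : Prop :=
  ApproxDiffTriple Ω D y f ∧ Set.InjOn y D ∧ (∀ x ∈ D, 0 < (f x).det) ∧
    IntegrableOn (fun x => (f x).det) Ω volume

/-- Weak convergence in `L¹(Ω)`, tested against bounded measurable functions. -/
def WeakL1ConvOn {N : ℕ} (Ω : Set (Euc N)) (u : ℕ → Euc N → ℝ) (v : Euc N → ℝ) : Prop :=
  ∀ g : Euc N → ℝ, Measurable g → (∃ C : ℝ, ∀ x, |g x| ≤ C) →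
    Tendsto (fun n => ∫ x in Ω, u n x * g x) atTop (𝓝 (∫ x in Ω, v x * g x))

/-!
By the area formula, `|y(E ∩ D)| = ∫_E det ∇y` and `∫_{y(E ∩ D)} g = ∫_E (g ∘ y) det ∇y`.
Testing the weak convergence of the Jacobians with `χ_E` gives `|im_G(y_n, E)| → |im_G(y, E)|`.
For bounded continuous `g`, `∫_E (g ∘ y_n) det ∇y_n → ∫_E (g ∘ y) det ∇y`: by Egorov's theorem
for the finite measure `|det ∇y| dx`, `g ∘ y_n → g ∘ y` uniformly off a set `t` of small
`det ∇y`-mass, and testing the weak convergence with `χ_t` keeps the `det ∇y_n`-mass of `t` small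
too. Since `C_c` is dense in `L¹`, this extends to `g = χ_{im_G(y, E)}`, so
`|im_G(y_n, E) ∩ im_G(y, E)| → |im_G(y, E)|`; together with the convergence of the volumes this
forces the symmetric difference to vanish.
-/

open scoped symmDiff

section MeasureTheory

variable {α : Type*} [MeasurableSpace α] {μ : Measure α}

theorem exists_tendstoUniformlyOn_compl_setIntegral_le {β : Type*} [PseudoEMetricSpace β]
    {Ω : Set α} {w : α → ℝ} (hw : IntegrableOn w Ω μ) {h : ℕ → α → β} {h₀ : α → β}
    (hh : ∀ n, StronglyMeasurable (h n)) (hh₀ : StronglyMeasurable h₀)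
    (hlim : ∀ᵐ x ∂μ.restrict Ω, Tendsto (h · x) atTop (𝓝 (h₀ x))) {δ : ℝ} (hδ : 0 < δ) :
    ∃ t, MeasurableSet t ∧ ∫ x in Ω ∩ t, w x ∂μ ≤ δ ∧ TendstoUniformlyOn h h₀ atTop tᶜ := by
  -- Egorov's theorem for the finite measure `|w| μ` on `Ω`
  let ν := (μ.restrict Ω).withDensity fun x => ‖w x‖ₑ
  have : IsFiniteMeasure ν := isFiniteMeasure_withDensity hw.2.ne
  obtain ⟨t, ht, hνt, hunif⟩ := tendstoUniformlyOn_of_ae_tendsto' (μ := ν) hh hh₀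
    ((withDensity_absolutelyContinuous _ _).ae_le hlim) hδ
  refine ⟨t, ht, ?_, hunif⟩
  rw [withDensity_apply _ ht, Measure.restrict_restrict ht, inter_comm] at hνt
  calc ∫ x in Ω ∩ t, w x ∂μ ≤ ∫ x in Ω ∩ t, ‖w x‖ ∂μ :=
        (Real.le_norm_self _).trans (norm_integral_le_integral_norm _)
    _ = (∫⁻ x in Ω ∩ t, ‖w x‖ₑ ∂μ).toReal :=
        integral_norm_eq_lintegral_enorm (hw.mono_set inter_subset_left).1
    _ ≤ δ := ENNReal.toReal_le_of_le_ofReal hδ.le hνt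

theorem norm_setIntegral_mul_le {S Ω t : Set α} (hSΩ : S ⊆ Ω) (ht : MeasurableSet t)
    {c k : α → ℝ} (hc : IntegrableOn c Ω μ) (hc0 : 0 ≤ᵐ[μ.restrict Ω] c)
    (hk : AEStronglyMeasurable k (μ.restrict Ω)) {η K : ℝ} (hη0 : 0 ≤ η)
    (hη : ∀ x ∈ tᶜ, |k x| ≤ η) (hK : ∀ x, |k x| ≤ K) :
    ‖∫ x in S, k x * c x ∂μ‖ ≤ η * ∫ x in Ω, c x ∂μ + K * ∫ x in Ω ∩ t, c x ∂μ := by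
  have hkc : IntegrableOn (fun x => |k x| * c x) Ω μ :=
    hc.bdd_mul hk.norm (ae_of_all _ fun x => by simpa using hK x)
  have hbound : ∀ x, |k x| ≤ η + t.indicator (fun _ => K) x := fun x => by
    by_cases hx : x ∈ t
    · simpa [hx] using (hK x).trans (le_add_of_nonneg_left hη0)
    · simpa [hx] using hη x hx
  calc ‖∫ x in S, k x * c x ∂μ‖ ≤ ∫ x in S, |k x| * c x ∂μ := by
        refine norm_integral_le_of_norm_le (hkc.mono_set hSΩ) ?_
        filter_upwards [ae_restrict_of_ae_restrict_of_subset hSΩ hc0] with x hx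
        rw [norm_mul, Real.norm_eq_abs, Real.norm_of_nonneg hx]
    _ ≤ ∫ x in Ω, |k x| * c x ∂μ :=
        setIntegral_mono_set hkc (hc0.mono fun x hx => mul_nonneg (abs_nonneg _) hx)
          hSΩ.eventuallyLE
    _ ≤ ∫ x in Ω, (η * c x + t.indicator (fun x => K * c x) x) ∂μ := by
        refine integral_mono_ae hkc ((hc.const_mul η).add ((hc.const_mul K).indicator ht)) ?_
        filter_upwards [hc0] with x hx
        by_cases hxt : x ∈ t
        · simpa [hxt, add_mul] using mul_le_mul_of_nonneg_right (hbound x) hx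
        · simpa [hxt] using mul_le_mul_of_nonneg_right (hbound x) hx
    _ = η * ∫ x in Ω, c x ∂μ + K * ∫ x in Ω ∩ t, c x ∂μ := by
        rw [integral_add (hc.const_mul η) ((hc.const_mul K).indicator ht), integral_const_mul,
          setIntegral_indicator ht, integral_const_mul]

theorem tendsto_measure_symmDiff_of_tendsto_measure_inter {A : ℕ → Set α} {A₀ : Set α}
    (hA : ∀ n, MeasurableSet (A n)) (hA₀ : MeasurableSet A₀) (hfin : μ A₀ ≠ ∞)
    (hvol : Tendsto (fun n => μ (A n)) atTop (𝓝 (μ A₀)))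
    (hinter : Tendsto (fun n => μ (A n ∩ A₀)) atTop (𝓝 (μ A₀))) :
    Tendsto (fun n => μ (A n ∆ A₀)) atTop (𝓝 0) := by
  have hfin' : ∀ n, μ (A n ∩ A₀) ≠ ∞ := fun n => measure_ne_top_of_subset inter_subset_right hfin
  have hA_diff : Tendsto (fun n => μ (A n \ A₀)) atTop (𝓝 0) := by
    refine (tsub_self (μ A₀) ▸ ENNReal.Tendsto.sub hvol hinter (Or.inl hfin)).congr fun n => ?_
    rw [← measure_sdiff inter_subset_left ((hA n).inter hA₀).nullMeasurableSet (hfin' n),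
      sdiff_self_inter]
  have hA₀_diff : Tendsto (fun n => μ (A₀ \ A n)) atTop (𝓝 0) := by
    refine (tsub_self (μ A₀) ▸ ENNReal.Tendsto.sub tendsto_const_nhds hinter (Or.inl hfin)).congr
      fun n => ?_
    rw [← measure_sdiff inter_subset_right ((hA n).inter hA₀).nullMeasurableSet (hfin' n),
      sdiff_inter_self_eq_sdiff]
  simpa only [measure_symmDiff_eq (hA _).nullMeasurableSet hA₀.nullMeasurableSet, add_zero]
    using hA_diff.add hA₀_diff

variable [TopologicalSpace α] [NormalSpace α] [R1Space α] [WeaklyLocallyCompactSpace α]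
  [BorelSpace α] [μ.Regular]

theorem tendsto_setIntegral_of_forall_hasCompactSupport {A : ℕ → Set α} {A₀ : Set α}
    (hA : ∀ g : α → ℝ, Continuous g → HasCompactSupport g →
      Tendsto (fun n => ∫ x in A n, g x ∂μ) atTop (𝓝 (∫ x in A₀, g x ∂μ)))
    {φ : α → ℝ} (hφ : Integrable φ μ) :
    Tendsto (fun n => ∫ x in A n, φ x ∂μ) atTop (𝓝 (∫ x in A₀, φ x ∂μ)) := by
  refine Metric.tendsto_nhds.2 fun ε hε => ?_
  obtain ⟨g, hgs, hφg, hgc, hgi⟩ := hφ.exists_hasCompactSupport_integral_sub_le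
    (by positivity : 0 < ε / 4)
  have happrox : ∀ s, dist (∫ x in s, φ x ∂μ) (∫ x in s, g x ∂μ) ≤ ε / 4 := fun s => by
    rw [dist_eq_norm, ← integral_sub hφ.integrableOn hgi.integrableOn]
    refine (norm_integral_le_integral_norm _).trans (le_trans ?_ hφg)
    exact setIntegral_le_integral (hφ.sub hgi).norm (ae_of_all _ fun _ => norm_nonneg _)
  filter_upwards [Metric.tendsto_nhds.1 (hA g hgc hgs) (ε / 4) (by positivity)] with n hn
  calc dist (∫ x in A n, φ x ∂μ) (∫ x in A₀, φ x ∂μ)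
      ≤ dist (∫ x in A n, φ x ∂μ) (∫ x in A n, g x ∂μ)
        + dist (∫ x in A n, g x ∂μ) (∫ x in A₀, g x ∂μ)
        + dist (∫ x in A₀, g x ∂μ) (∫ x in A₀, φ x ∂μ) := dist_triangle4 _ _ _ _
    _ < ε := by linarith [happrox (A n), dist_comm (∫ x in A₀, g x ∂μ) _ ▸ happrox A₀]

theorem tendsto_measure_symmDiff_of_tendsto_setIntegral {A : ℕ → Set α} {A₀ : Set α}
    (hA : ∀ n, MeasurableSet (A n)) (hA₀ : MeasurableSet A₀) (hfin : μ A₀ ≠ ∞)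
    (hvol : Tendsto (fun n => μ (A n)) atTop (𝓝 (μ A₀)))
    (hg : ∀ g : α → ℝ, Continuous g → HasCompactSupport g →
      Tendsto (fun n => ∫ x in A n, g x ∂μ) atTop (𝓝 (∫ x in A₀, g x ∂μ))) :
    Tendsto (fun n => μ (A n ∆ A₀)) atTop (𝓝 0) := by
  have hind := tendsto_setIntegral_of_forall_hasCompactSupport hg
    ((integrable_indicator_iff hA₀).2 (integrableOn_const (C := (1 : ℝ)) hfin))
  simp only [setIntegral_indicator hA₀, integral_const, smul_eq_mul, mul_one,
    measureReal_restrict_apply_univ, inter_self] at hind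
  refine tendsto_measure_symmDiff_of_tendsto_measure_inter hA hA₀ hfin hvol ?_
  exact (ENNReal.tendsto_toReal_iff
    (fun n => measure_ne_top_of_subset inter_subset_right hfin) hfin).1 hind

end MeasureTheory

namespace AdmissibleDef

variable {N : ℕ} {Ω D S : Set (Euc N)} {u : Euc N → Euc N} {f : Euc N → Euc N →L[ℝ] Euc N}

theorem ae_mem (h : AdmissibleDef Ω D u f) (hSΩ : S ⊆ Ω) : ∀ᵐ x ∂volume.restrict S, x ∈ D := by
  change volume.restrict S Dᶜ = 0
  rw [Measure.restrict_apply h.1.1.compl]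
  exact measure_mono_null (fun x hx => ⟨hSΩ hx.2, hx.1⟩ : Dᶜ ∩ S ⊆ Ω \ D) h.1.2.2.1

theorem det_nonneg_ae (h : AdmissibleDef Ω D u f) : 0 ≤ᵐ[volume.restrict Ω] fun x => (f x).det :=
  (h.ae_mem subset_rfl).mono fun x hx => (h.2.2.1 x hx).le

theorem restrict_inter (h : AdmissibleDef Ω D u f) (hSΩ : S ⊆ Ω) :
    volume.restrict (S ∩ D) = volume.restrict S := by
  refine Measure.restrict_congr_set (ae_eq_set.2 ⟨?_, ?_⟩)
  · rw [sdiff_eq_empty.2 inter_subset_left, measure_empty]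
  · exact measure_mono_null
      (fun x hx => ⟨hSΩ hx.1, fun hxD => hx.2 ⟨hx.1, hxD⟩⟩ : S \ (S ∩ D) ⊆ Ω \ D) h.1.2.2.1

theorem hasFDerivWithinAt_inter (h : AdmissibleDef Ω D u f) :
    ∀ x ∈ S ∩ D, HasFDerivWithinAt u (f x) (S ∩ D) x :=
  fun x hx => (h.1.2.2.2 x hx.2).mono inter_subset_right

theorem measurableSet_image (h : AdmissibleDef Ω D u f) (hS : MeasurableSet S) :
    MeasurableSet (u '' (S ∩ D)) :=
  measurable_image_of_fderivWithin (hS.inter h.1.1)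
    h.hasFDerivWithinAt_inter (h.2.1.mono inter_subset_right)

theorem volume_image (h : AdmissibleDef Ω D u f) (hS : MeasurableSet S) (hSΩ : S ⊆ Ω) :
    volume (u '' (S ∩ D)) = ENNReal.ofReal (∫ x in S, (f x).det) := by
  rw [← lintegral_abs_det_fderiv_eq_addHaar_image volume (hS.inter h.1.1)
    h.hasFDerivWithinAt_inter (h.2.1.mono inter_subset_right),
    h.restrict_inter hSΩ, ofReal_integral_eq_lintegral_ofReal (h.2.2.2.mono_set hSΩ)
    (ae_restrict_of_ae_restrict_of_subset hSΩ h.det_nonneg_ae)]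
  refine lintegral_congr_ae ((h.ae_mem hSΩ).mono fun x hx => ?_)
  simp only [abs_of_pos (h.2.2.1 x hx)]

theorem setIntegral_image (h : AdmissibleDef Ω D u f) (hS : MeasurableSet S) (hSΩ : S ⊆ Ω)
    (g : Euc N → ℝ) : ∫ z in u '' (S ∩ D), g z = ∫ x in S, g (u x) * (f x).det := by
  rw [integral_image_eq_integral_abs_det_fderiv_smul volume (hS.inter h.1.1)
    h.hasFDerivWithinAt_inter (h.2.1.mono inter_subset_right),
    h.restrict_inter hSΩ]
  refine integral_congr_ae ((h.ae_mem hSΩ).mono fun x hx => ?_)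
  simp only [smul_eq_mul, abs_of_pos (h.2.2.1 x hx), mul_comm]

theorem aemeasurable (h : AdmissibleDef Ω D u f) : AEMeasurable u (volume.restrict Ω) := by
  rw [← h.restrict_inter subset_rfl, inter_eq_right.2 h.1.2.1]
  exact ContinuousOn.aemeasurable (fun x hx => (h.1.2.2.2 x hx).continuousWithinAt) h.1.1

end AdmissibleDef

namespace WeakL1ConvOn

variable {N : ℕ} {Ω : Set (Euc N)} {c : ℕ → Euc N → ℝ} {c₀ : Euc N → ℝ}

theorem tendsto_setIntegral_mul (hc : WeakL1ConvOn Ω c c₀) {S : Set (Euc N)}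
    (hS : MeasurableSet S) {g : Euc N → ℝ} (hg : Measurable g) (hgb : ∃ C, ∀ x, |g x| ≤ C) :
    Tendsto (fun n => ∫ x in Ω ∩ S, g x * c n x) atTop (𝓝 (∫ x in Ω ∩ S, g x * c₀ x)) := by
  obtain ⟨C, hC⟩ := hgb
  have hind : ∀ v : Euc N → ℝ,
      ∫ x in Ω, v x * S.indicator g x = ∫ x in Ω ∩ S, g x * v x := fun v => by
    simp_rw [mul_comm (v _), ← indicator_mul_left]
    exact setIntegral_indicator hS
  have hbound : ∀ x, |S.indicator g x| ≤ C := fun x => by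
    by_cases hx : x ∈ S
    · simpa [hx] using hC x
    · simpa [hx] using (abs_nonneg _).trans (hC x)
  simpa only [hind] using hc _ (hg.indicator hS) ⟨C, hbound⟩

theorem tendsto_setIntegral (hc : WeakL1ConvOn Ω c c₀) {S : Set (Euc N)} (hS : MeasurableSet S) :
    Tendsto (fun n => ∫ x in Ω ∩ S, c n x) atTop (𝓝 (∫ x in Ω ∩ S, c₀ x)) := by
  simpa using hc.tendsto_setIntegral_mul hS measurable_const ⟨1, fun _ => (abs_one).le⟩

theorem tendsto_setIntegral_sub_mul (hc : WeakL1ConvOn Ω c c₀)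
    (hc_int : ∀ n, IntegrableOn (c n) Ω) (hc_nonneg : ∀ n, 0 ≤ᵐ[volume.restrict Ω] c n)
    (hc₀_int : IntegrableOn c₀ Ω) {h : ℕ → Euc N → ℝ} {h₀ : Euc N → ℝ}
    (hh : ∀ n, Measurable (h n)) (hh₀ : Measurable h₀) {M : ℝ} (hM : ∀ n x, |h n x| ≤ M)
    (hM₀ : ∀ x, |h₀ x| ≤ M) (hlim : ∀ᵐ x ∂volume.restrict Ω, Tendsto (h · x) atTop (𝓝 (h₀ x)))
    {S : Set (Euc N)} (hSΩ : S ⊆ Ω) :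
    Tendsto (fun n => ∫ x in S, (h n x - h₀ x) * c n x) atTop (𝓝 0) := by
  refine NormedAddGroup.tendsto_nhds_zero.2 fun ε hε => ?_
  obtain ⟨C, hC⟩ := (hc.tendsto_setIntegral MeasurableSet.univ).bddAbove_range
  have hM0 : 0 ≤ M := (abs_nonneg _).trans (hM₀ 0)
  -- chosen so that `η * (|C| + 1) = ε / 2` and `2 * M * (2 * δ) < ε / 2`
  set η := ε / (2 * (|C| + 1))
  set δ := ε / (8 * (M + 1))
  obtain ⟨t, ht, htδ, hunif⟩ := exists_tendstoUniformlyOn_compl_setIntegral_le hc₀_int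
    (fun n => (hh n).stronglyMeasurable) hh₀.stronglyMeasurable hlim (by positivity : 0 < δ)
  have hsmall : ∀ᶠ n in atTop, ∫ x in Ω ∩ t, c n x < 2 * δ :=
    (hc.tendsto_setIntegral ht).eventually_lt_const (by linarith [show 0 < δ by positivity])
  have hclose : ∀ᶠ n in atTop, ∀ x ∈ tᶜ, |h n x - h₀ x| ≤ η := by
    filter_upwards [Metric.tendstoUniformlyOn_iff.1 hunif η (by positivity)] with n hn x hx
    rw [← Real.dist_eq, dist_comm]
    exact (hn x hx).le
  filter_upwards [hsmall, hclose] with n hsmall hclose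
  have hCn : ∫ x in Ω, c n x ≤ |C| + 1 := by
    simpa using (hC ⟨n, rfl⟩).trans ((le_abs_self C).trans (le_add_of_nonneg_right zero_le_one))
  calc ‖∫ x in S, (h n x - h₀ x) * c n x‖
      ≤ η * (∫ x in Ω, c n x) + 2 * M * ∫ x in Ω ∩ t, c n x :=
        norm_setIntegral_mul_le (k := fun x => h n x - h₀ x) (K := 2 * M) hSΩ ht (hc_int n)
          (hc_nonneg n)
          ((hh n).sub hh₀).aestronglyMeasurable (by positivity) hclose
          fun x => (abs_sub _ _).trans (by linarith [hM n x, hM₀ x])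
    _ ≤ η * (|C| + 1) + 2 * M * (2 * δ) := by gcongr
    _ < ε := by
        have : M / (M + 1) < 1 := (div_lt_one (by positivity)).2 (lt_add_one M)
        simp only [η, δ]
        field_simp
        nlinarith

theorem tendsto_setIntegral_mul_of_tendsto_ae (hc : WeakL1ConvOn Ω c c₀)
    (hc_int : ∀ n, IntegrableOn (c n) Ω) (hc_nonneg : ∀ n, 0 ≤ᵐ[volume.restrict Ω] c n)
    (hc₀_int : IntegrableOn c₀ Ω) {h : ℕ → Euc N → ℝ} {h₀ : Euc N → ℝ}
    (hh : ∀ n, Measurable (h n)) (hh₀ : Measurable h₀) {M : ℝ} (hM : ∀ n x, |h n x| ≤ M)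
    (hM₀ : ∀ x, |h₀ x| ≤ M) (hlim : ∀ᵐ x ∂volume.restrict Ω, Tendsto (h · x) atTop (𝓝 (h₀ x)))
    {E : Set (Euc N)} (hE : MeasurableSet E) (hEΩ : E ⊆ Ω) :
    Tendsto (fun n => ∫ x in E, h n x * c n x) atTop (𝓝 (∫ x in E, h₀ x * c₀ x)) := by
  have hint : ∀ (k : Euc N → ℝ) (K : ℝ), Measurable k → (∀ x, |k x| ≤ K) → ∀ n,
      IntegrableOn (fun x => k x * c n x) E :=
    fun k K hk hkK n => ((hc_int n).mono_set hEΩ).bdd_mul hk.aestronglyMeasurable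
      (ae_of_all _ hkK)
  have hsplit : ∀ n, ∫ x in E, h n x * c n x
      = (∫ x in E, (h n x - h₀ x) * c n x) + ∫ x in E, h₀ x * c n x := fun n => by
    rw [← integral_add (hint (fun x => h n x - h₀ x) (2 * M) ((hh n).sub hh₀)
      (fun x => (abs_sub _ _).trans (by linarith [hM n x, hM₀ x])) n) (hint _ M hh₀ hM₀ n)]
    simp only [sub_mul, sub_add_cancel]
  have hlim₀ := hc.tendsto_setIntegral_mul hE hh₀ ⟨M, hM₀⟩
  rw [inter_eq_right.2 hEΩ] at hlim₀
  simpa only [hsplit, zero_add] using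
    (hc.tendsto_setIntegral_sub_mul hc_int hc_nonneg hc₀_int hh hh₀ hM hM₀ hlim hEΩ).add hlim₀

end WeakL1ConvOn

theorem tendsto_setIntegral_image_of_admissible {N : ℕ} {Ω : Set (Euc N)}
    {y : ℕ → Euc N → Euc N} {D : ℕ → Set (Euc N)} {f : ℕ → Euc N → Euc N →L[ℝ] Euc N}
    (hadm : ∀ n, AdmissibleDef Ω (D n) (y n) (f n))
    {y₀ : Euc N → Euc N} {D₀ : Set (Euc N)} {f₀ : Euc N → Euc N →L[ℝ] Euc N}
    (hadm₀ : AdmissibleDef Ω D₀ y₀ f₀)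
    (hae : ∀ᵐ x ∂(volume.restrict Ω), Tendsto (fun n => y n x) atTop (𝓝 (y₀ x)))
    (hdet : WeakL1ConvOn Ω (fun n x => (f n x).det) (fun x => (f₀ x).det))
    {E : Set (Euc N)} (hE : MeasurableSet E) (hEΩ : E ⊆ Ω)
    {g : Euc N → ℝ} (hg : Continuous g) {M : ℝ} (hM : ∀ z, |g z| ≤ M) :
    Tendsto (fun n => ∫ z in y n '' (E ∩ D n), g z) atTop
      (𝓝 (∫ z in y₀ '' (E ∩ D₀), g z)) := by
  let Y n := (hadm n).aemeasurable.mk (y n)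
  let Y₀ := hadm₀.aemeasurable.mk y₀
  have hYΩ : ∀ᵐ x ∂volume.restrict Ω, (∀ n, y n x = Y n x) ∧ y₀ x = Y₀ x :=
    (ae_all_iff.2 fun n => (hadm n).aemeasurable.ae_eq_mk).and hadm₀.aemeasurable.ae_eq_mk
  have hY := ae_restrict_of_ae_restrict_of_subset hEΩ hYΩ
  have hYn : ∀ n, ∫ x in E, g (y n x) * (f n x).det = ∫ x in E, g (Y n x) * (f n x).det :=
    fun n => integral_congr_ae (hY.mono fun x hx => by simp only [hx.1 n])
  have hY₀ : ∫ x in E, g (y₀ x) * (f₀ x).det = ∫ x in E, g (Y₀ x) * (f₀ x).det :=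
    integral_congr_ae (hY.mono fun x hx => by simp only [hx.2])
  simp only [(hadm _).setIntegral_image hE hEΩ, hadm₀.setIntegral_image hE hEΩ, hYn, hY₀]
  refine hdet.tendsto_setIntegral_mul_of_tendsto_ae (fun n => (hadm n).2.2.2)
    (fun n => (hadm n).det_nonneg_ae) hadm₀.2.2.2
    (fun n => hg.measurable.comp (hadm n).aemeasurable.measurable_mk)
    (hg.measurable.comp hadm₀.aemeasurable.measurable_mk) (fun n x => hM _) (fun x => hM _) ?_
    hE hEΩ
  filter_upwards [hae, hYΩ] with x hx hxY
  have hYx : Tendsto (fun n => Y n x) atTop (𝓝 (Y₀ x)) := by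
    simpa only [← hxY.1, ← hxY.2] using hx
  exact (hg.tendsto _).comp hYx

theorem convergence_of_geometric_images_general {N : ℕ}
    (Ω : Set (Euc N))
    (y : ℕ → Euc N → Euc N) (D : ℕ → Set (Euc N)) (f : ℕ → Euc N → Euc N →L[ℝ] Euc N)
    (hadm : ∀ n, AdmissibleDef Ω (D n) (y n) (f n))
    (y₀ : Euc N → Euc N) (D₀ : Set (Euc N)) (f₀ : Euc N → Euc N →L[ℝ] Euc N)
    (hadm₀ : AdmissibleDef Ω D₀ y₀ f₀)
    (hae : ∀ᵐ x ∂(volume.restrict Ω), Tendsto (fun n => y n x) atTop (𝓝 (y₀ x)))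
    (hdet : WeakL1ConvOn Ω (fun n x => (f n x).det) (fun x => (f₀ x).det))
    (E : Set (Euc N)) (hE : MeasurableSet E) (hEΩ : E ⊆ Ω) :
    Tendsto
      (fun n =>
        volume ((y n '' (E ∩ D n) \ y₀ '' (E ∩ D₀)) ∪ (y₀ '' (E ∩ D₀) \ y n '' (E ∩ D n))))
      atTop (𝓝 0) := by
  have hvol : Tendsto (fun n => volume (y n '' (E ∩ D n))) atTop
      (𝓝 (volume (y₀ '' (E ∩ D₀)))) := by
    simp only [(hadm _).volume_image hE hEΩ, hadm₀.volume_image hE hEΩ]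
    refine (ENNReal.continuous_ofReal.tendsto _).comp ?_
    simpa only [inter_eq_right.2 hEΩ] using hdet.tendsto_setIntegral hE
  refine tendsto_measure_symmDiff_of_tendsto_setIntegral (fun n => (hadm n).measurableSet_image hE)
    (hadm₀.measurableSet_image hE) (by simp [hadm₀.volume_image hE hEΩ]) hvol fun g hg hgs => ?_
  obtain ⟨M, hM⟩ := hgs.exists_bound_of_continuous hg
  exact tendsto_setIntegral_image_of_admissible hadm hadm₀ hae hdet hE hEΩ hg
    fun z => (Real.norm_eq_abs _ ▸ hM z)

/-- Convergence of geometric images: `χ_{im_G(y_n,E)} → χ_{im_G(y,E)}` in `L¹(ℝ^N)`. -/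
theorem convergence_of_geometric_images {N : ℕ} (hN : 2 ≤ N)
    (Ω : Set (Euc N)) (hΩo : IsOpen Ω) (hΩb : Bornology.IsBounded Ω)
    (y : ℕ → Euc N → Euc N) (D : ℕ → Set (Euc N)) (f : ℕ → Euc N → Euc N →L[ℝ] Euc N)
    (hadm : ∀ n, AdmissibleDef Ω (D n) (y n) (f n))
    (y₀ : Euc N → Euc N) (D₀ : Set (Euc N)) (f₀ : Euc N → Euc N →L[ℝ] Euc N)
    (hadm₀ : AdmissibleDef Ω D₀ y₀ f₀)
    (hae : ∀ᵐ x ∂(volume.restrict Ω), Tendsto (fun n => y n x) atTop (𝓝 (y₀ x)))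
    (hdet : WeakL1ConvOn Ω (fun n x => (f n x).det) (fun x => (f₀ x).det))
    (E : Set (Euc N)) (hE : MeasurableSet E) (hEΩ : E ⊆ Ω) :
    Tendsto
      (fun n =>
        volume ((y n '' (E ∩ D n) \ y₀ '' (E ∩ D₀)) ∪ (y₀ '' (E ∩ D₀) \ y n '' (E ∩ D n))))
      atTop (𝓝 0) :=
  convergence_of_geometric_images_general Ω y D f hadm y₀ D₀ f₀ hadm₀ hae hdet E hE hEΩ
end
end

section
/- Let Ω ⊆ ℝ^N be a bounded open set. For each n let (y_n, D_n, f_n) be an admissible deformation triple on Ω, and let (y, D, f) be an admissible deformation triple on Ω. Assume: y_n → y almost everywhere in Ω; x ↦ det(f_n x) converges weakly in L¹(Ω) to x ↦ det(f x); and the Jacobians of the inverses are equi-integrable, i.e. for every ε > 0 there is δ > 0 such that for all n and every measurable S ⊆ ℝ^N with volume(S) < δ one has volume(D_n ∩ y_n⁻¹(S)) < ε. Then: (a) for every measurable set F ⊆ ℝ^N, volume(D_n ∩ y_n⁻¹(F)) → volume(D ∩ y⁻¹(F)) as n → ∞ (the weak L¹(ℝ^N) convergence of χ_{im_G(y_n,Ω)}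 det∇y_n⁻¹ to χ_{im_G(y,Ω)} det∇y⁻¹, tested setwise); and (b) for every measurable set F ⊆ ℝ^N with volume(F) < ∞, volume((D_n ∩ y_n⁻¹(F)) Δ (D ∩ y⁻¹(F))) → 0 as n → ∞ (L¹(Ω) convergence of the indicators of the preimages y_n⁻¹(F ∩ im_G(y_n,Ω))). -/
open MeasureTheory Filter Topology Set
open scoped ENNReal NNReal

noncomputable section

/-!
Let `μ` be Lebesgue measure on `Ω`, so that `volume (D ∩ y⁻¹' S) = μ (y⁻¹' S)`. For `F` of finite
measure choose a compact `K ⊆ F` and an open `U ⊇ F` with `F \ K` and `U \ F` small, and `r > 0`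
with the `r`-thickening of `K` inside `U`. Where `dist (yₙ x) (y₀ x) < r`, the memberships of
`yₙ x` and `y₀ x` in `F` can only differ if one of them lies in `F \ K` or `U \ F`; these preimages
are small by equi-integrability (which passes to `y₀` by Fatou's lemma on open sets), and
`{r ≤ dist yₙ y₀}` is small because a.e. convergence on a finite measure space is convergence in
measure. This is (b). It gives `μ (yₙ⁻¹' F) → μ (y₀⁻¹' F)` for `F` of finite measure, and since
the total masses `μ (yₙ⁻¹' univ) = μ Ω` do not depend on `n`, the mass that the `yₙ` send outside
a large ball is controlled by that of `y₀`, which gives (a) for every measurable `F`.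
-/

open scoped symmDiff

theorem preimage_symmDiff_preimage_subset {α β : Type*} [PseudoMetricSpace β] {a b : α → β}
    {F K U : Set β} {r : ℝ} (hKU : Metric.thickening r K ⊆ U) :
    (a ⁻¹' F) ∆ (b ⁻¹' F) ⊆
      (a ⁻¹' (F \ K) ∪ b ⁻¹' (F \ K)) ∪ (a ⁻¹' (U \ F) ∪ b ⁻¹' (U \ F)) ∪
        {x | r ≤ dist (a x) (b x)} := by
  have hthick {p q : β} (hp : p ∈ K) (hpq : dist p q < r) : q ∈ U :=
    hKU (Metric.mem_thickening_iff.2 ⟨p, hp, by rwa [dist_comm]⟩)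
  rintro x (⟨haF, hbF⟩ | ⟨hbF, haF⟩)
  · by_cases haK : a x ∈ K
    · by_cases hr : r ≤ dist (a x) (b x)
      · exact Or.inr hr
      · exact Or.inl (Or.inr (Or.inr ⟨hthick haK (not_le.1 hr), hbF⟩))
    · exact Or.inl (Or.inl (Or.inl ⟨haF, haK⟩))
  · by_cases hbK : b x ∈ K
    · by_cases hr : r ≤ dist (a x) (b x)
      · exact Or.inr hr
      · rw [dist_comm] at hr
        exact Or.inl (Or.inr (Or.inl ⟨hthick hbK (not_le.1 hr), haF⟩))
    · exact Or.inl (Or.inl (Or.inr ⟨hbF, hbK⟩))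

section PreimageConvergence

variable {α β : Type*} [MeasurableSpace α] {μ : Measure α}

theorem tendsto_measure_of_tendsto_measure_symmDiff {ι : Type*} {L : Filter ι}
    {s : ι → Set α} {t : Set α} (h : Tendsto (fun i => μ (s i ∆ t)) L (𝓝 0)) :
    Tendsto (fun i => μ (s i)) L (𝓝 (μ t)) := by
  have hlower := ENNReal.Tendsto.sub (tendsto_const_nhds (x := μ t)) h
    (Or.inr ENNReal.zero_ne_top)
  have hupper := (tendsto_const_nhds (x := μ t)).add h
  rw [tsub_zero] at hlower
  rw [add_zero] at hupper
  refine tendsto_of_tendsto_of_tendsto_of_le_of_le hlower hupper (fun i => ?_) (fun i => ?_)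
  · rw [tsub_le_iff_tsub_le, symmDiff_comm]
    exact le_measure_symmDiff
  · rw [← tsub_le_iff_left]
    exact le_measure_symmDiff

theorem measure_preimage_le_liminf_of_tendsto_ae [TopologicalSpace β] {g : ℕ → α → β}
    {g₀ : α → β} (hlim : ∀ᵐ x ∂μ, Tendsto (fun n => g n x) atTop (𝓝 (g₀ x))) {U : Set β}
    (hU : IsOpen U) : μ (g₀ ⁻¹' U) ≤ liminf (fun n => μ (g n ⁻¹' U)) atTop := by
  have hsub : g₀ ⁻¹' U ≤ᵐ[μ] ⋃ k, ⋂ n ≥ k, g n ⁻¹' U := by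
    filter_upwards [hlim] with x hx hxU
    obtain ⟨k, hk⟩ := eventually_atTop.1 (hx.eventually (hU.mem_nhds hxU))
    exact mem_iUnion.2 ⟨k, mem_iInter₂.2 hk⟩
  calc μ (g₀ ⁻¹' U) ≤ μ (⋃ k, ⋂ n ≥ k, g n ⁻¹' U) := measure_mono_ae hsub
    _ = ⨆ k, μ (⋂ n ≥ k, g n ⁻¹' U) :=
        Monotone.measure_iUnion fun j k hjk =>
          biInter_mono (fun n hn => hjk.trans hn) fun _ _ => le_rfl
    _ ≤ ⨆ k, ⨅ n ≥ k, μ (g n ⁻¹' U) :=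
        iSup_mono fun k => le_iInf₂ fun n hn => measure_mono (biInter_subset_of_mem hn)
    _ = liminf (fun n => μ (g n ⁻¹' U)) atTop := liminf_eq_iSup_iInf_of_nat.symm

variable [MeasurableSpace β] {ν : Measure β}

theorem tendsto_measure_of_tendsto_measure_of_measure_ne_top [SigmaFinite ν] {ι : Type*}
    {L : Filter ι} [L.NeBot] {m : ι → Measure β} {m₀ : Measure β} [∀ i, IsFiniteMeasure (m i)]
    [IsFiniteMeasure m₀] (huniv : Tendsto (fun i => m i univ) L (𝓝 (m₀ univ)))
    (h : ∀ F, MeasurableSet F → ν F ≠ ∞ → Tendsto (fun i => m i F) L (𝓝 (m₀ F)))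
    {F : Set β} (hF : MeasurableSet F) : Tendsto (fun i => m i F) L (𝓝 (m₀ F)) := by
  have hS k : MeasurableSet (spanningSets ν k) := measurableSet_spanningSets ν k
  have hνS k : ν (spanningSets ν k) ≠ ∞ := (measure_spanningSets_lt_top ν k).ne
  have hFS k : Tendsto (fun i => m i (F ∩ spanningSets ν k)) L
      (𝓝 (m₀ (F ∩ spanningSets ν k))) :=
    h _ (hF.inter (hS k)) (measure_inter_lt_top_of_right_ne_top (hνS k)).ne
  have hSc k : Tendsto (fun i => m i (spanningSets ν k)ᶜ) L (𝓝 (m₀ (spanningSets ν k)ᶜ)) := by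
    simp only [measure_compl (hS k) (measure_ne_top _ _)]
    exact ENNReal.Tendsto.sub huniv (h _ (hS k) (hνS k)) (Or.inl (measure_ne_top _ _))
  have hinner : Tendsto (fun k => m₀ (F ∩ spanningSets ν k)) atTop (𝓝 (m₀ F)) := by
    simpa only [Function.comp_def, ← inter_iUnion, iUnion_spanningSets, inter_univ] using
      tendsto_measure_iUnion_atTop (μ := m₀) fun j k hjk =>
        inter_subset_inter_right F (monotone_spanningSets ν hjk)
  have houter : Tendsto (fun k => m₀ (spanningSets ν k)ᶜ) atTop (𝓝 0) := by
    simpa only [Function.comp_def, ← compl_iUnion, iUnion_spanningSets, compl_univ,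
      measure_empty] using
      tendsto_measure_iInter_atTop (μ := m₀) (fun k => (hS k).compl.nullMeasurableSet)
        (fun j k hjk => compl_subset_compl.2 (monotone_spanningSets ν hjk)) ⟨0, measure_ne_top _ _⟩
  refine tendsto_of_le_liminf_of_limsup_le ?_ ?_
  · refine le_of_tendsto' hinner fun k => ?_
    rw [← (hFS k).liminf_eq]
    exact liminf_le_liminf (.of_forall fun i => measure_mono inter_subset_left)
  · refine ge_of_tendsto' (by simpa using hinner.add houter) fun k => ?_
    calc limsup (fun i => m i F) L
        ≤ limsup (fun i => m i (F ∩ spanningSets ν k) + m i (spanningSets ν k)ᶜ) L :=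
          limsup_le_limsup (.of_forall fun i => (measure_le_inter_add_sdiff _ _ _).trans
            (add_le_add le_rfl (measure_mono (sdiff_subset_compl _ _))))
      _ = m₀ (F ∩ spanningSets ν k) + m₀ (spanningSets ν k)ᶜ := ((hFS k).add (hSc k)).limsup_eq

theorem measure_preimage_le_of_tendsto_ae [TopologicalSpace β] [OpensMeasurableSpace β]
    [ν.OuterRegular] {g : ℕ → α → β} {g₀ : α → β}
    (hlim : ∀ᵐ x ∂μ, Tendsto (fun n => g n x) atTop (𝓝 (g₀ x))) {ε δ : ℝ≥0∞}
    (h : ∀ n S, MeasurableSet S → ν S < δ → μ (g n ⁻¹' S) < ε) {S : Set β} (hS : ν S < δ) :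
    μ (g₀ ⁻¹' S) ≤ ε := by
  obtain ⟨U, hSU, hUo, hUδ⟩ := S.exists_isOpen_lt_of_lt δ hS
  calc μ (g₀ ⁻¹' S) ≤ μ (g₀ ⁻¹' U) := measure_mono (preimage_mono hSU)
    _ ≤ liminf (fun n => μ (g n ⁻¹' U)) atTop := measure_preimage_le_liminf_of_tendsto_ae hlim hUo
    _ ≤ ε := liminf_le_of_frequently_le' (.of_forall fun n => (h n U hUo.measurableSet hUδ).le)

variable [IsFiniteMeasure μ] [MetricSpace β] [BorelSpace β] [ν.OuterRegular]
  [ν.InnerRegularCompactLTTop] {g : ℕ → α → β} {g₀ : α → β}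

theorem tendsto_measure_preimage_symmDiff_of_tendsto_ae
    (hgm : ∀ n, AEStronglyMeasurable (g n) μ)
    (hlim : ∀ᵐ x ∂μ, Tendsto (fun n => g n x) atTop (𝓝 (g₀ x)))
    (hequi : ∀ ε, 0 < ε → ∃ δ, 0 < δ ∧ ∀ n S, MeasurableSet S → ν S < δ → μ (g n ⁻¹' S) < ε)
    {F : Set β} (hF : MeasurableSet F) (hνF : ν F ≠ ∞) :
    Tendsto (fun n => μ ((g n ⁻¹' F) ∆ (g₀ ⁻¹' F))) atTop (𝓝 0) := by
  rw [ENNReal.tendsto_nhds_zero]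
  intro ε hε
  have hε5 : 0 < ε / 5 := ENNReal.div_pos hε.ne' (by norm_num)
  obtain ⟨δ, hδ, hgδ⟩ := hequi (ε / 5) hε5
  obtain ⟨U, hFU, hUo, -, hUF⟩ := hF.exists_isOpen_sdiff_lt hνF hδ.ne'
  obtain ⟨K, hKF, hKc, hFK⟩ := hF.exists_isCompact_sdiff_lt hνF hδ.ne'
  obtain ⟨r, hr, hKU⟩ := hKc.exists_thickening_subset_open hUo (hKF.trans hFU)
  have hfar := tendstoInMeasure_iff_dist.1 (tendstoInMeasure_of_tendsto_ae hgm hlim) r hr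
  filter_upwards [ENNReal.tendsto_nhds_zero.1 hfar (ε / 5) hε5] with n hn
  calc μ ((g n ⁻¹' F) ∆ (g₀ ⁻¹' F))
      ≤ μ ((g n ⁻¹' (F \ K) ∪ g₀ ⁻¹' (F \ K)) ∪ (g n ⁻¹' (U \ F) ∪ g₀ ⁻¹' (U \ F)) ∪
          {x | r ≤ dist (g n x) (g₀ x)}) := measure_mono (preimage_symmDiff_preimage_subset hKU)
    _ ≤ (μ (g n ⁻¹' (F \ K)) + μ (g₀ ⁻¹' (F \ K))) +
          (μ (g n ⁻¹' (U \ F)) + μ (g₀ ⁻¹' (U \ F))) + μ {x | r ≤ dist (g n x) (g₀ x)} := by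
        grw [measure_union_le, measure_union_le, measure_union_le, measure_union_le]
    _ ≤ (ε / 5 + ε / 5) + (ε / 5 + ε / 5) + ε / 5 := by
        gcongr
        · exact (hgδ n _ (hF.diff hKc.measurableSet) hFK).le
        · exact measure_preimage_le_of_tendsto_ae hlim hgδ hFK
        · exact (hgδ n _ (hUo.measurableSet.diff hF) hUF).le
        · exact measure_preimage_le_of_tendsto_ae hlim hgδ hUF
    _ = 5 * (ε / 5) := by ring
    _ ≤ ε := ENNReal.mul_div_le

theorem tendsto_measure_preimage_of_tendsto_ae [SigmaFinite ν]
    (hgm : ∀ n, AEStronglyMeasurable (g n) μ)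
    (hlim : ∀ᵐ x ∂μ, Tendsto (fun n => g n x) atTop (𝓝 (g₀ x)))
    (hequi : ∀ ε, 0 < ε → ∃ δ, 0 < δ ∧ ∀ n S, MeasurableSet S → ν S < δ → μ (g n ⁻¹' S) < ε)
    {F : Set β} (hF : MeasurableSet F) :
    Tendsto (fun n => μ (g n ⁻¹' F)) atTop (𝓝 (μ (g₀ ⁻¹' F))) := by
  have hg₀m : AEMeasurable g₀ μ :=
    aemeasurable_of_tendsto_metrizable_ae' (fun n => (hgm n).aemeasurable) hlim
  have hmap {G : Set β} (hG : MeasurableSet G) (n : ℕ) : μ.map (g n) G = μ (g n ⁻¹' G) :=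
    Measure.map_apply_of_aemeasurable (hgm n).aemeasurable hG
  have hmap₀ {G : Set β} (hG : MeasurableSet G) : μ.map g₀ G = μ (g₀ ⁻¹' G) :=
    Measure.map_apply_of_aemeasurable hg₀m hG
  simp only [← hmap hF, ← hmap₀ hF]
  refine tendsto_measure_of_tendsto_measure_of_measure_ne_top (ν := ν) ?_ (fun G hG hνG => ?_) hF
  · simp only [hmap MeasurableSet.univ, hmap₀ MeasurableSet.univ, preimage_univ,
      tendsto_const_nhds]
  · simp only [hmap hG, hmap₀ hG]
    exact tendsto_measure_of_tendsto_measure_symmDiff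
      (tendsto_measure_preimage_symmDiff_of_tendsto_ae hgm hlim hequi hG hνG)

end PreimageConvergence

namespace ApproxDiffTriple

variable {N : ℕ} {A D : Set (Euc N)} {u : Euc N → Euc N} {f : Euc N → Euc N →L[ℝ] Euc N}

theorem ae_eq (h : ApproxDiffTriple A D u f) : D =ᵐ[volume] A :=
  ae_eq_set.2 ⟨by rw [sdiff_eq_empty.2 h.2.1, measure_empty], h.2.2.1⟩

theorem measure_inter_eq_restrict (h : ApproxDiffTriple A D u f) (s : Set (Euc N)) :
    volume (D ∩ s) = volume.restrict A s := by
  rw [← Measure.restrict_congr_set h.ae_eq, Measure.restrict_apply' h.1, inter_comm]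

theorem measure_inter_symmDiff_eq_restrict {D' : Set (Euc N)} {u' : Euc N → Euc N}
    {f' : Euc N → Euc N →L[ℝ] Euc N} (h : ApproxDiffTriple A D u f)
    (h' : ApproxDiffTriple A D' u' f') (s t : Set (Euc N)) :
    volume ((D ∩ s) ∆ (D' ∩ t)) = volume.restrict A (s ∆ t) := by
  rw [← h.measure_inter_eq_restrict, inter_symmDiff_distrib_left]
  exact measure_congr
    ((ae_eq_refl _).symmDiff (ae_eq_set_inter (h'.ae_eq.trans h.ae_eq.symm) (ae_eq_refl t)))

theorem aestronglyMeasurable (h : ApproxDiffTriple A D u f) :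
    AEStronglyMeasurable u (volume.restrict A) := by
  rw [← Measure.restrict_congr_set h.ae_eq]
  exact ContinuousOn.aestronglyMeasurable (fun x hx => (h.2.2.2 x hx).continuousWithinAt) h.1

end ApproxDiffTriple

theorem convergence_of_inverse_jacobians_and_preimages_general {N : ℕ}
    (Ω : Set (Euc N)) (hΩb : Bornology.IsBounded Ω)
    (y : ℕ → Euc N → Euc N) (D : ℕ → Set (Euc N)) (f : ℕ → Euc N → Euc N →L[ℝ] Euc N)
    (hadm : ∀ n, AdmissibleDef Ω (D n) (y n) (f n))
    (y₀ : Euc N → Euc N) (D₀ : Set (Euc N)) (f₀ : Euc N → Euc N →L[ℝ] Euc N)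
    (hadm₀ : AdmissibleDef Ω D₀ y₀ f₀)
    (hae : ∀ᵐ x ∂(volume.restrict Ω), Tendsto (fun n => y n x) atTop (𝓝 (y₀ x)))
    (hequi : ∀ ε : ℝ≥0∞, 0 < ε → ∃ δ : ℝ≥0∞, 0 < δ ∧ ∀ n, ∀ S : Set (Euc N),
      MeasurableSet S → volume S < δ → volume (D n ∩ y n ⁻¹' S) < ε) :
    (∀ F : Set (Euc N), MeasurableSet F →
        Tendsto (fun n => volume (D n ∩ y n ⁻¹' F)) atTop (𝓝 (volume (D₀ ∩ y₀ ⁻¹' F)))) ∧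
    (∀ F : Set (Euc N), MeasurableSet F → volume F < ⊤ →
        Tendsto
          (fun n => volume (((D n ∩ y n ⁻¹' F) \ (D₀ ∩ y₀ ⁻¹' F)) ∪
            ((D₀ ∩ y₀ ⁻¹' F) \ (D n ∩ y n ⁻¹' F))))
          atTop (𝓝 0)) := by
  have : IsFiniteMeasure (volume.restrict Ω) :=
    isFiniteMeasure_restrict.2 hΩb.measure_lt_top.ne
  have hadm' n := (hadm n).1
  have hgm n := (hadm' n).aestronglyMeasurable
  simp only [(hadm' _).measure_inter_eq_restrict] at hequi
  refine ⟨fun F hF => ?_, fun F hF hFfin => ?_⟩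
  · simp only [(hadm' _).measure_inter_eq_restrict, hadm₀.1.measure_inter_eq_restrict]
    exact tendsto_measure_preimage_of_tendsto_ae hgm hae hequi hF
  · simp only [← Set.symmDiff_def, (hadm' _).measure_inter_symmDiff_eq_restrict hadm₀.1]
    exact tendsto_measure_preimage_symmDiff_of_tendsto_ae hgm hae hequi hF hFfin.ne

/-- Convergence of Jacobians of inverses (setwise weak `L¹` convergence) and of
preimages of finite-measure sets. -/
theorem convergence_of_inverse_jacobians_and_preimages {N : ℕ} (hN : 2 ≤ N)
    (Ω : Set (Euc N)) (hΩo : IsOpen Ω) (hΩb : Bornology.IsBounded Ω)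
    (y : ℕ → Euc N → Euc N) (D : ℕ → Set (Euc N)) (f : ℕ → Euc N → Euc N →L[ℝ] Euc N)
    (hadm : ∀ n, AdmissibleDef Ω (D n) (y n) (f n))
    (y₀ : Euc N → Euc N) (D₀ : Set (Euc N)) (f₀ : Euc N → Euc N →L[ℝ] Euc N)
    (hadm₀ : AdmissibleDef Ω D₀ y₀ f₀)
    (hae : ∀ᵐ x ∂(volume.restrict Ω), Tendsto (fun n => y n x) atTop (𝓝 (y₀ x)))
    (hdet : WeakL1ConvOn Ω (fun n x => (f n x).det) (fun x => (f₀ x).det))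
    (hequi : ∀ ε : ℝ≥0∞, 0 < ε → ∃ δ : ℝ≥0∞, 0 < δ ∧ ∀ n, ∀ S : Set (Euc N),
      MeasurableSet S → volume S < δ → volume (D n ∩ y n ⁻¹' S) < ε) :
    (∀ F : Set (Euc N), MeasurableSet F →
        Tendsto (fun n => volume (D n ∩ y n ⁻¹' F)) atTop (𝓝 (volume (D₀ ∩ y₀ ⁻¹' F)))) ∧
    (∀ F : Set (Euc N), MeasurableSet F → volume F < ⊤ →
        Tendsto
          (fun n => volume (((D n ∩ y n ⁻¹' F) \ (D₀ ∩ y₀ ⁻¹' F)) ∪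
            ((D₀ ∩ y₀ ⁻¹' F) \ (D n ∩ y n ⁻¹' F))))
          atTop (𝓝 0)) :=
  convergence_of_inverse_jacobians_and_preimages_general Ω hΩb y D f hadm y₀ D₀ f₀ hadm₀ hae hequi
end
end

section
/- Let A ⊆ ℝ^N be measurable with finite Lebesgue measure. For each n let (u_n, D_n, f_n) be an a.e. approximately differentiable triple on A, and let (u, D, f) be an a.e. approximately differentiable triple on A such that x ↦ |det(f x)| is integrable on A. Assume the sequence (x ↦ |det(f_n x)|)_n is equi-integrable on A. Let E ⊆ A be measurable and suppose that u_n → u almost everywhere on E and that liminf_{n→∞} volume(u_n(E ∩ D_n)) ≥ volume(u(E ∩ D)). Then volume((u_n(E ∩ D_n)) Δ (u(E ∩ D))) → 0 as n → ∞; equivalently, the indicator functions of u_n(E ∩ D_n) converge in L¹(ℝ^N) to the indicator function of u(E ∩ D). (No injectivity and no sign condition on the Jacobians is assumed here.) -/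
open MeasureTheory Filter Topology Set
open scoped ENNReal NNReal

noncomputable section

/-!
By Egorov's theorem and inner regularity, `u n → u₀` uniformly on a compact set `F ⊆ E ∩ D₀`
with `vol (E \ F)` small. Eventually `u n '' F` lies in a thin closed neighbourhood of the compact
set `u₀ '' F ⊆ u₀ '' (E ∩ D₀)`, whose excess over `u₀ '' F` has small volume; and by the area
inequality `vol (u n '' ((E ∩ D n) \ F)) ≤ ∫ (E \ F), |det (f n)|`, which is small uniformly in `n`
by equi-integrability. Hence `vol (G n \ G₀) → 0`, where `G n = u n '' (E ∩ D n)` and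
`G₀ = u₀ '' (E ∩ D₀)`. The other half of the symmetric difference is controlled by
`vol (G₀ \ G n) + vol (G n) ≤ vol G₀ + vol (G n \ G₀)` together with the `liminf` hypothesis;
`vol G₀ < ∞` by the area inequality and the integrability of `|det f₀|`.
-/

open Metric

section Regularity

variable {α : Type*} [TopologicalSpace α] [MeasurableSpace α] [OpensMeasurableSpace α]
  [T2Space α] {μ : Measure α} [μ.InnerRegularCompactLTTop]

theorem MeasurableSet.exists_isCompact_subset_measure_sdiff_iUnion_eq_zero {S : Set α}
    (hS : MeasurableSet S) (hSfin : μ S ≠ ∞) :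
    ∃ K : ℕ → Set α, (∀ j, IsCompact (K j)) ∧ (∀ j, K j ⊆ S) ∧ μ (S \ ⋃ j, K j) = 0 := by
  choose K hKS hK hSK using fun j : ℕ =>
    hS.exists_isCompact_sdiff_lt hSfin (ENNReal.inv_ne_zero.2 (ENNReal.natCast_ne_top j))
  refine ⟨K, hK, hKS, le_antisymm (ge_of_tendsto' ENNReal.tendsto_inv_nat_nhds_zero
    fun j => ?_) zero_le⟩
  exact (measure_mono (sdiff_subset_sdiff_right (subset_iUnion K j))).trans (hSK j).le

/-- Egorov's theorem combined with inner regularity. -/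
theorem exists_isCompact_measure_sdiff_lt_tendstoUniformlyOn {β : Type*}
    [PseudoEMetricSpace β] {g : ℕ → α → β} {g₀ : α → β} {C : Set α} (hC : MeasurableSet C)
    (hCfin : μ C ≠ ∞) (hg : ∀ n, AEStronglyMeasurable (g n) (μ.restrict C))
    (hg₀ : AEStronglyMeasurable g₀ (μ.restrict C))
    (hlim : ∀ᵐ x ∂μ.restrict C, Tendsto (fun n => g n x) atTop (𝓝 (g₀ x)))
    {δ : ℝ≥0∞} (hδ : δ ≠ 0) :
    ∃ F ⊆ C, IsCompact F ∧ μ (C \ F) < δ ∧ TendstoUniformlyOn g g₀ atTop F := by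
  obtain ⟨r, -, hr₀, hrδ⟩ := ENNReal.lt_iff_exists_real_btwn.1 (pos_iff_ne_zero.2 hδ)
  have hr : 0 < r := ENNReal.ofReal_pos.1 hr₀
  -- Egorov needs strongly measurable functions: apply it to the representatives `mk`, which
  -- agree with `g n` and `g₀` outside the null set `Z`.
  have hmk : ∀ᵐ x ∂μ.restrict C, (∀ n, g n x = (hg n).mk (g n) x) ∧ g₀ x = hg₀.mk g₀ x :=
    (ae_all_iff.2 fun n => (hg n).ae_eq_mk).and hg₀.ae_eq_mk
  obtain ⟨Z, hZ, hZm, hZ0⟩ := exists_measurable_superset_of_null (ae_iff.1 hmk)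
  obtain ⟨t, -, htm, htμ, hunif⟩ := tendstoUniformlyOn_of_ae_tendsto
    (fun n => (hg n).stronglyMeasurable_mk) hg₀.stronglyMeasurable_mk hC
    (by rwa [Measure.restrict_apply_self]) ((hlim.and hmk).mono fun x hx _ => by
      simpa only [hx.2.1, hx.2.2] using hx.1) (half_pos hr)
  have hgood : ∀ x ∉ Z, (∀ n, g n x = (hg n).mk (g n) x) ∧ g₀ x = hg₀.mk g₀ x :=
    fun x hx => not_not.1 fun h => hx (hZ h)
  rw [Measure.restrict_apply htm] at htμ
  rw [Measure.restrict_apply hZm] at hZ0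
  obtain ⟨F, hF, hFc, hFμ⟩ := (hC.diff (htm.union hZm)).exists_isCompact_sdiff_lt
    (measure_ne_top_of_subset sdiff_subset hCfin) (ENNReal.ofReal_pos.2 (half_pos hr)).ne'
  refine ⟨F, hF.trans sdiff_subset, hFc, ?_, ?_⟩
  · have hsplit : C \ F ⊆ (t ∩ C ∪ Z ∩ C) ∪ (C \ (t ∪ Z)) \ F := fun x ⟨hxC, hxF⟩ => by
      by_cases hx : x ∈ t ∪ Z
      · exact Or.inl (hx.imp (⟨·, hxC⟩) (⟨·, hxC⟩))
      · exact Or.inr ⟨⟨hxC, hx⟩, hxF⟩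
    calc μ (C \ F) ≤ μ (t ∩ C) + μ (Z ∩ C) + μ ((C \ (t ∪ Z)) \ F) :=
          (measure_mono hsplit).trans ((measure_union_le _ _).trans
            (add_le_add_left (measure_union_le _ _) _))
      _ < ENNReal.ofReal (r / 2) + ENNReal.ofReal (r / 2) := by
          rw [hZ0, add_zero]
          exact ENNReal.add_lt_add_of_le_of_lt (ne_top_of_le_ne_top ENNReal.ofReal_ne_top htμ)
            htμ hFμ
      _ = ENNReal.ofReal r := by
          rw [← ENNReal.ofReal_add (half_pos hr).le (half_pos hr).le, add_halves]
      _ < δ := hrδ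
  · have hFgood : ∀ x ∈ F, x ∈ C \ t ∧ x ∉ Z := fun x hx =>
      ⟨⟨(hF hx).1, fun h => (hF hx).2 (Or.inl h)⟩, fun h => (hF hx).2 (Or.inr h)⟩
    exact ((hunif.mono fun x hx => (hFgood x hx).1).congr
      (Eventually.of_forall fun n x hx => ((hgood x (hFgood x hx).2).1 n).symm)).congr_right
      fun x hx => ((hgood x (hFgood x hx).2).2).symm

end Regularity

theorem IsCompact.tendsto_measure_cthickening_sdiff {α : Type*} [MetricSpace α]
    [MeasurableSpace α] [OpensMeasurableSpace α] [ProperSpace α] {μ : Measure α}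
    [IsFiniteMeasureOnCompacts μ] {K : Set α} (hK : IsCompact K) :
    Tendsto (fun r => μ (cthickening r K \ K)) (𝓝 0) (𝓝 0) := by
  have hfin : μ K ≠ ∞ := hK.measure_lt_top.ne
  simp_rw [measure_sdiff (self_subset_cthickening K) hK.nullMeasurableSet hfin]
  simpa using ENNReal.Tendsto.sub (tendsto_measure_cthickening_of_isCompact hK)
    (tendsto_const_nhds (x := μ K)) (Or.inl hfin)

theorem TendstoUniformlyOn.eventually_image_subset_cthickening {α β ι : Type*}
    [PseudoMetricSpace β] {g : ι → α → β} {g₀ : α → β} {l : Filter ι} {F : Set α}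
    (h : TendstoUniformlyOn g g₀ l F) {r : ℝ} (hr : 0 < r) :
    ∀ᶠ n in l, g n '' F ⊆ cthickening r (g₀ '' F) := by
  filter_upwards [Metric.tendstoUniformlyOn_iff.1 h r hr] with n hn
  rintro _ ⟨x, hx, rfl⟩
  exact mem_cthickening_of_dist_le _ _ _ _ (mem_image_of_mem g₀ hx) (by
    rw [dist_comm]; exact (hn x hx).le)

theorem tendsto_measure_sdiff_of_le_liminf {α ι : Type*} [MeasurableSpace α] {μ : Measure α}
    {l : Filter ι} {s : Set α} {t : ι → Set α} (hs : μ s ≠ ∞)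
    (ht : ∀ n, NullMeasurableSet (t n) μ) (hts : Tendsto (fun n => μ (t n \ s)) l (𝓝 0))
    (hlim : μ s ≤ l.liminf fun n => μ (t n)) :
    Tendsto (fun n => μ (s \ t n)) l (𝓝 0) := by
  rw [ENNReal.tendsto_nhds_zero]
  intro ε hε
  rcases eq_or_ne (μ s) 0 with hs0 | hs0
  · exact Eventually.of_forall fun n => (measure_mono sdiff_subset).trans (hs0 ▸ zero_le)
  rcases eq_or_ne ε ∞ with rfl | hεtop
  · exact Eventually.of_forall fun n => le_top
  have hε2 : ε / 2 ≠ 0 := (ENNReal.half_pos hε.ne').ne'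
  filter_upwards [(ENNReal.tendsto_nhds_zero.1 hts) (ε / 2) (pos_iff_ne_zero.2 hε2),
    eventually_lt_of_lt_liminf ((ENNReal.sub_lt_self hs hs0 hε2).trans_le hlim)]
    with n hsmall hlarge
  have hunion : μ (s \ t n) + μ (t n) ≤ μ s + ε / 2 := by
    rw [← measure_union₀ (ht n) disjoint_sdiff_left.aedisjoint, sdiff_union_self,
      ← union_sdiff_self]
    exact (measure_union_le _ _).trans (by gcongr)
  have htfin : μ (t n) ≠ ∞ := ne_top_of_le_ne_top
    (ENNReal.add_ne_top.2 ⟨hs, ENNReal.div_ne_top hεtop two_ne_zero⟩) (le_add_self.trans hunion)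
  refine ENNReal.le_of_add_le_add_right htfin (hunion.trans ?_)
  calc μ s + ε / 2 ≤ μ (t n) + ε / 2 + ε / 2 := by gcongr; exact tsub_le_iff_right.1 hlarge.le
    _ = ε + μ (t n) := by rw [add_assoc, ENNReal.add_halves, add_comm]

theorem DifferentiableOn.nullMeasurableSet_image {E : Type*} [NormedAddCommGroup E]
    [NormedSpace ℝ E] [FiniteDimensional ℝ E] [MeasurableSpace E] [BorelSpace E]
    (μ : Measure E) [μ.IsAddHaarMeasure] {f : E → E} {s : Set E}
    (hf : DifferentiableOn ℝ f s) (hs : MeasurableSet s) (hsfin : μ s ≠ ∞) :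
    NullMeasurableSet (f '' s) μ := by
  obtain ⟨K, hK, hKs, hsK⟩ := hs.exists_isCompact_subset_measure_sdiff_iUnion_eq_zero hsfin
  rw [← union_sdiff_cancel (iUnion_subset hKs), image_union, image_iUnion]
  exact (MeasurableSet.iUnion fun j => ((hK j).image_of_continuousOn
    (hf.continuousOn.mono (hKs j))).isClosed.measurableSet).nullMeasurableSet.union
    (NullMeasurableSet.of_null
      (addHaar_image_eq_zero_of_differentiableOn_of_addHaar_eq_zero μ (hf.mono sdiff_subset) hsK))

namespace ApproxDiffTriple

variable {N : ℕ} {A D S : Set (Euc N)} {u : Euc N → Euc N} {f : Euc N → Euc N →L[ℝ] Euc N}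

theorem hasFDerivWithinAt_of_subset (h : ApproxDiffTriple A D u f) (hSD : S ⊆ D) :
    ∀ x ∈ S, HasFDerivWithinAt u (f x) S x :=
  fun x hx => (h.2.2.2 x (hSD hx)).mono hSD

theorem continuousOn (h : ApproxDiffTriple A D u f) : ContinuousOn u D :=
  fun x hx => (h.2.2.2 x hx).continuousWithinAt

theorem volume_sdiff_eq_zero (h : ApproxDiffTriple A D u f) (hSA : S ⊆ A) :
    volume (S \ D) = 0 :=
  measure_mono_null (sdiff_subset_sdiff_left hSA) h.2.2.1

theorem volume_image_le (h : ApproxDiffTriple A D u f) (hS : MeasurableSet S) (hSD : S ⊆ D) :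
    volume (u '' S) ≤ ∫⁻ x in S, ENNReal.ofReal |(f x).det| :=
  addHaar_image_le_lintegral_abs_det_fderiv volume hS (h.hasFDerivWithinAt_of_subset hSD)

theorem nullMeasurableSet_image (h : ApproxDiffTriple A D u f) (hS : MeasurableSet S)
    (hSD : S ⊆ D) (hSfin : volume S ≠ ∞) : NullMeasurableSet (u '' S) volume :=
  DifferentiableOn.nullMeasurableSet_image volume
    (fun x hx => (h.hasFDerivWithinAt_of_subset hSD x hx).differentiableWithinAt) hS hSfin

end ApproxDiffTriple

section Sequence

variable {N : ℕ} {A : Set (Euc N)} {u : ℕ → Euc N → Euc N} {D : ℕ → Set (Euc N)}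
  {f : ℕ → Euc N → Euc N →L[ℝ] Euc N} {u₀ : Euc N → Euc N} {D₀ : Set (Euc N)}
  {f₀ : Euc N → Euc N →L[ℝ] Euc N} {E : Set (Euc N)}

theorem exists_isCompact_volume_sdiff_lt_tendstoUniformlyOn (hAfin : volume A < ⊤)
    (htri : ∀ n, ApproxDiffTriple A (D n) (u n) (f n)) (htri₀ : ApproxDiffTriple A D₀ u₀ f₀)
    (hE : MeasurableSet E) (hEA : E ⊆ A)
    (hae : ∀ᵐ x ∂(volume.restrict E), Tendsto (fun n => u n x) atTop (𝓝 (u₀ x)))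
    {δ : ℝ≥0∞} (hδ : δ ≠ 0) :
    ∃ F ⊆ E ∩ D₀, IsCompact F ∧ volume (E \ F) < δ ∧ TendstoUniformlyOn u u₀ atTop F := by
  set C := E ∩ (D₀ ∩ ⋂ n, D n)
  have hCm : MeasurableSet C := hE.inter (htri₀.1.inter (.iInter fun n => (htri n).1))
  have hCE : C ⊆ E := inter_subset_left
  have hCD₀ : C ⊆ D₀ := inter_subset_right.trans inter_subset_left
  have hCD : ∀ n, C ⊆ D n :=
    fun n => inter_subset_right.trans (inter_subset_right.trans (iInter_subset _ n))
  have hEC : volume (E \ C) = 0 := by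
    refine measure_mono_null ?_ (measure_union_null (htri₀.volume_sdiff_eq_zero hEA)
      (measure_iUnion_null fun n => (htri n).volume_sdiff_eq_zero hEA))
    rintro x ⟨hxE, hxC⟩
    by_contra h
    simp only [mem_union, mem_iUnion, Set.mem_sdiff, not_or, not_exists, not_and, not_not] at h
    exact hxC ⟨hxE, h.1 hxE, mem_iInter.2 fun n => h.2 n hxE⟩
  obtain ⟨F, hFC, hF, hCF, hunif⟩ := exists_isCompact_measure_sdiff_lt_tendstoUniformlyOn hCm
    (measure_ne_top_of_subset (hCE.trans hEA) hAfin.ne)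
    (fun n => ((htri n).continuousOn.mono (hCD n)).aestronglyMeasurable hCm)
    ((htri₀.continuousOn.mono hCD₀).aestronglyMeasurable hCm)
    (ae_restrict_of_ae_restrict_of_subset hCE hae) hδ
  refine ⟨F, fun x hx => ⟨hCE (hFC hx), hCD₀ (hFC hx)⟩, hF, ?_, hunif⟩
  rw [← sdiff_union_sdiff_cancel hCE hFC]
  exact (measure_union_le _ _).trans_lt (by rwa [hEC, zero_add])

theorem tendsto_volume_image_sdiff_image (hAfin : volume A < ⊤)
    (htri : ∀ n, ApproxDiffTriple A (D n) (u n) (f n)) (htri₀ : ApproxDiffTriple A D₀ u₀ f₀)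
    (hequi : ∀ ε : ℝ≥0∞, 0 < ε → ∃ δ : ℝ≥0∞, 0 < δ ∧ ∀ n, ∀ S : Set (Euc N), S ⊆ A →
      MeasurableSet S → volume S < δ → (∫⁻ x in S, ENNReal.ofReal |(f n x).det|) < ε)
    (hE : MeasurableSet E) (hEA : E ⊆ A)
    (hae : ∀ᵐ x ∂(volume.restrict E), Tendsto (fun n => u n x) atTop (𝓝 (u₀ x))) :
    Tendsto (fun n => volume (u n '' (E ∩ D n) \ u₀ '' (E ∩ D₀))) atTop (𝓝 0) := by
  rw [ENNReal.tendsto_nhds_zero]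
  intro ε hε
  obtain ⟨δ, hδ, hsmall⟩ := hequi (ε / 2) (ENNReal.half_pos hε.ne')
  obtain ⟨F, hFED₀, hF, hEF, hunif⟩ :=
    exists_isCompact_volume_sdiff_lt_tendstoUniformlyOn hAfin htri htri₀ hE hEA hae hδ.ne'
  set K := u₀ '' F
  have hK : IsCompact K :=
    hF.image_of_continuousOn (htri₀.continuousOn.mono (hFED₀.trans inter_subset_right))
  obtain ⟨r, hthick, hr⟩ := (((hK.tendsto_measure_cthickening_sdiff (μ := volume)).eventually
    (gt_mem_nhds (ENNReal.half_pos hε.ne'))).filter_mono nhdsWithin_le_nhds |>.and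
    (self_mem_nhdsWithin (s := Ioi 0))).exists
  filter_upwards [hunif.eventually_image_subset_cthickening hr] with n hn
  have hrest : volume (u n '' ((E ∩ D n) \ F)) ≤ ε / 2 := by
    have hm : MeasurableSet ((E ∩ D n) \ F) := (hE.inter (htri n).1).diff hF.measurableSet
    have hvol : volume ((E ∩ D n) \ F) < δ :=
      (measure_mono (t := E \ F) fun x hx => ⟨hx.1.1, hx.2⟩).trans_lt hEF
    exact ((htri n).volume_image_le hm fun x hx => hx.1.2).trans
      (hsmall n _ (fun x hx => hEA hx.1.1) hm hvol).le
  have hcover : u n '' (E ∩ D n) \ u₀ '' (E ∩ D₀) ⊆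
      (cthickening r K \ K) ∪ u n '' ((E ∩ D n) \ F) := by
    rintro _ ⟨⟨x, hx, rfl⟩, hx₀⟩
    by_cases hxF : x ∈ F
    · exact Or.inl ⟨hn (mem_image_of_mem _ hxF), fun h => hx₀ (image_mono hFED₀ h)⟩
    · exact Or.inr (mem_image_of_mem _ ⟨hx, hxF⟩)
  calc volume (u n '' (E ∩ D n) \ u₀ '' (E ∩ D₀))
      ≤ volume (cthickening r K \ K) + volume (u n '' ((E ∩ D n) \ F)) :=
        (measure_mono hcover).trans (measure_union_le _ _)
    _ ≤ ε / 2 + ε / 2 := add_le_add hthick.le hrest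
    _ = ε := ENNReal.add_halves ε

end Sequence

theorem convergence_of_images_of_approx_diff_maps_general {N : ℕ}
    (A : Set (Euc N)) (hAfin : volume A < ⊤)
    (u : ℕ → Euc N → Euc N) (D : ℕ → Set (Euc N)) (f : ℕ → Euc N → Euc N →L[ℝ] Euc N)
    (htri : ∀ n, ApproxDiffTriple A (D n) (u n) (f n))
    (u₀ : Euc N → Euc N) (D₀ : Set (Euc N)) (f₀ : Euc N → Euc N →L[ℝ] Euc N)
    (htri₀ : ApproxDiffTriple A D₀ u₀ f₀)
    (hint₀ : IntegrableOn (fun x => |(f₀ x).det|) A volume)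
    (hequi : ∀ ε : ℝ≥0∞, 0 < ε → ∃ δ : ℝ≥0∞, 0 < δ ∧ ∀ n, ∀ S : Set (Euc N), S ⊆ A →
      MeasurableSet S → volume S < δ → (∫⁻ x in S, ENNReal.ofReal |(f n x).det|) < ε)
    (E : Set (Euc N)) (hE : MeasurableSet E) (hEA : E ⊆ A)
    (hae : ∀ᵐ x ∂(volume.restrict E), Tendsto (fun n => u n x) atTop (𝓝 (u₀ x)))
    (hliminf : volume (u₀ '' (E ∩ D₀)) ≤ atTop.liminf (fun n => volume (u n '' (E ∩ D n)))) :
    Tendsto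
      (fun n =>
        volume ((u n '' (E ∩ D n) \ u₀ '' (E ∩ D₀)) ∪ (u₀ '' (E ∩ D₀) \ u n '' (E ∩ D n))))
      atTop (𝓝 0) := by
  have hfin₀ : volume (u₀ '' (E ∩ D₀)) ≠ ∞ :=
    (htri₀.volume_image_le (hE.inter htri₀.1) inter_subset_right |>.trans
      (lintegral_mono_set (inter_subset_right.trans htri₀.2.1))).trans_lt
      hint₀.lintegral_lt_top |>.ne
  have hmeas : ∀ n, NullMeasurableSet (u n '' (E ∩ D n)) volume := fun n =>
    (htri n).nullMeasurableSet_image (hE.inter (htri n).1) inter_subset_right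
      (measure_ne_top_of_subset (inter_subset_left.trans hEA) hAfin.ne)
  have hout := tendsto_volume_image_sdiff_image hAfin htri htri₀ hequi hE hEA hae
  have hin := tendsto_measure_sdiff_of_le_liminf hfin₀ hmeas hout hliminf
  exact tendsto_of_tendsto_of_tendsto_of_le_of_le tendsto_const_nhds
    (by simpa using hout.add hin) (fun _ => zero_le) (fun _ => measure_union_le _ _)

/-- Convergence of images for approximately differentiable maps, without injectivity
or sign conditions on the Jacobians (Lemma on convergence of `im_G`). -/
theorem convergence_of_images_of_approx_diff_maps {N : ℕ} (hN : 2 ≤ N)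
    (A : Set (Euc N)) (hA : MeasurableSet A) (hAfin : volume A < ⊤)
    (u : ℕ → Euc N → Euc N) (D : ℕ → Set (Euc N)) (f : ℕ → Euc N → Euc N →L[ℝ] Euc N)
    (htri : ∀ n, ApproxDiffTriple A (D n) (u n) (f n))
    (u₀ : Euc N → Euc N) (D₀ : Set (Euc N)) (f₀ : Euc N → Euc N →L[ℝ] Euc N)
    (htri₀ : ApproxDiffTriple A D₀ u₀ f₀)
    (hint₀ : IntegrableOn (fun x => |(f₀ x).det|) A volume)
    (hequi : ∀ ε : ℝ≥0∞, 0 < ε → ∃ δ : ℝ≥0∞, 0 < δ ∧ ∀ n, ∀ S : Set (Euc N), S ⊆ A →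
      MeasurableSet S → volume S < δ → (∫⁻ x in S, ENNReal.ofReal |(f n x).det|) < ε)
    (E : Set (Euc N)) (hE : MeasurableSet E) (hEA : E ⊆ A)
    (hae : ∀ᵐ x ∂(volume.restrict E), Tendsto (fun n => u n x) atTop (𝓝 (u₀ x)))
    (hliminf : volume (u₀ '' (E ∩ D₀)) ≤ atTop.liminf (fun n => volume (u n '' (E ∩ D n)))) :
    Tendsto
      (fun n =>
        volume ((u n '' (E ∩ D n) \ u₀ '' (E ∩ D₀)) ∪ (u₀ '' (E ∩ D₀) \ u n '' (E ∩ D n))))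
      atTop (𝓝 0) :=
  convergence_of_images_of_approx_diff_maps_general A hAfin u D f htri u₀ D₀ f₀ htri₀ hint₀ hequi E
    hE hEA hae hliminf
end
end

section
/- Let A ⊆ ℝ^N be measurable and let (u, D, f) be an a.e. approximately differentiable triple on A such that det(f x) ≠ 0 for almost every x ∈ D. Then u satisfies Lusin's condition (N⁻¹): for every set Y ⊆ ℝ^N of Lebesgue (outer) measure zero, the preimage A ∩ u⁻¹(Y) has Lebesgue outer measure zero. -/
open MeasureTheory Filter Topology Set
open scoped ENNReal NNReal

noncomputable section

/-- For any linear map `A`, there is a positive `δ` such that, if `A` is invertible, any map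
`δ`-approximated by `A` on a set expands its volume at least by a fixed positive factor. -/
lemma exists_good_delta {N : ℕ} (A : Euc N →L[ℝ] Euc N) :
    ∃ δ : ℝ≥0, δ ≠ 0 ∧ (A.det ≠ 0 →
      ∀ (s : Set (Euc N)) (g : Euc N → Euc N), ApproximatesLinearOn g A s δ →
        (Real.toNNReal (|A.det| / 2) : ℝ≥0∞) * volume s ≤ volume (g '' s)) := by
  by_cases hd : A.det = 0
  · exact ⟨1, one_ne_zero, fun h => absurd hd h⟩
  · have habs : (0 : ℝ) < |A.det| := abs_pos.mpr hd
    have hm : ((Real.toNNReal (|A.det| / 2)) : ℝ≥0∞) < ENNReal.ofReal |A.det| := by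
      show ENNReal.ofReal (|A.det| / 2) < ENNReal.ofReal |A.det|
      exact (ENNReal.ofReal_lt_ofReal_iff habs).mpr (by linarith)
    have h := MeasureTheory.mul_le_addHaar_image_of_lt_det (μ := (volume : Measure (Euc N))) A hm
    obtain ⟨δ, hδprop, hδmem⟩ := (h.and self_mem_nhdsWithin).exists
    exact ⟨δ, ne_of_gt hδmem, fun _ => hδprop⟩

/-- Lusin's condition (N⁻¹) for a.e. approximately differentiable maps with
a.e. nonvanishing Jacobian. -/
theorem lusin_condition_N_inv {N : ℕ} (hN : 2 ≤ N)
    (A D : Set (Euc N)) (hA : MeasurableSet A)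
    (u : Euc N → Euc N) (f : Euc N → Euc N →L[ℝ] Euc N)
    (htri : ApproxDiffTriple A D u f)
    (hdet : ∀ᵐ x ∂(volume.restrict D), (f x).det ≠ 0) :
    ∀ Y : Set (Euc N), volume Y = 0 → volume (A ∩ u ⁻¹' Y) = 0 := by
  intro Y hY
  obtain ⟨hD, hDA, hAD, hderiv⟩ := htri
  -- the set of points of `D` where the Jacobian vanishes is null
  set D₀ : Set (Euc N) := {x ∈ D | (f x).det ≠ 0} with hD₀def
  have hDD₀ : volume (D \ D₀) = 0 := by
    have h0 : (volume.restrict D) {x | ¬ (f x).det ≠ 0} = 0 := ae_iff.mp hdet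
    rw [Measure.restrict_apply' hD] at h0
    refine measure_mono_null (fun x hx => ?_) h0
    obtain ⟨hxD, hx0⟩ := hx
    exact ⟨fun h => hx0 ⟨hxD, h⟩, hxD⟩
  -- main step: the bad preimage inside `D₀` is null
  set s : Set (Euc N) := D₀ ∩ u ⁻¹' Y with hsdef
  have hs0 : volume s = 0 := by
    rcases s.eq_empty_or_nonempty with hse | hsne
    · simp [hse]
    have hds : ∀ x ∈ s, HasFDerivWithinAt u (f x) s x := fun x hx =>
      (hderiv x hx.1.1).mono (fun y hy => hy.1.1)
    choose r hr0 hrprop using fun A : Euc N →L[ℝ] Euc N => exists_good_delta A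
    obtain ⟨t, B, -, -, hcover, happrox, hval⟩ :=
      exists_partition_approximatesLinearOn_of_hasFDerivWithinAt u s f hds r hr0
    have hpieces : ∀ n, volume (s ∩ t n) = 0 := by
      intro n
      obtain ⟨y, hy, hBy⟩ := hval hsne n
      have hdetB : (B n).det ≠ 0 := by rw [hBy]; exact hy.1.2
      have him : volume (u '' (s ∩ t n)) = 0 := by
        refine measure_mono_null (fun z hz => ?_) hY
        obtain ⟨x, hx, rfl⟩ := hz
        exact hx.1.2
      have hineq := hrprop (B n) hdetB (s ∩ t n) u (happrox n)
      rw [him] at hineq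
      have hmne : (Real.toNNReal (|(B n).det| / 2) : ℝ≥0∞) ≠ 0 := by
        simp only [ne_eq, ENNReal.coe_eq_zero, Real.toNNReal_eq_zero, not_le]
        positivity
      exact (mul_eq_zero.mp (nonpos_iff_eq_zero.mp hineq)).resolve_left hmne
    have hle : volume s ≤ 0 := by
      calc volume s ≤ volume (⋃ n, s ∩ t n) := by
            refine measure_mono (fun x hx => ?_)
            obtain ⟨n, hn⟩ := mem_iUnion.mp (hcover hx)
            exact mem_iUnion.mpr ⟨n, hx, hn⟩
        _ ≤ ∑' n, volume (s ∩ t n) := measure_iUnion_le _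
        _ = 0 := by simp [hpieces]
    exact nonpos_iff_eq_zero.mp hle
  -- assemble
  have hsub : A ∩ u ⁻¹' Y ⊆ (A \ D) ∪ ((D \ D₀) ∪ s) := by
    intro x hx
    by_cases hxD : x ∈ D
    · by_cases hxD₀ : x ∈ D₀
      · exact Or.inr (Or.inr ⟨hxD₀, hx.2⟩)
      · exact Or.inr (Or.inl ⟨hxD, hxD₀⟩)
    · exact Or.inl ⟨hx.1, hxD⟩
  refine measure_mono_null hsub ?_
  rw [measure_union_null_iff]
  exact ⟨hAD, by rw [measure_union_null_iff]; exact ⟨hDD₀, hs0⟩⟩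
end
end

section
/- Let E be a nontrivial real normed vector space and let η : ℝ → ℝ be continuous on the interval (0,1) with η(r) > 0 for all r ∈ (0,1). Define u on the punctured open unit ball B(0,1) \ {0} of E by u(x) := (η(‖x‖)/‖x‖) · x. Then u is injective on B(0,1) \ {0} if and only if η is strictly monotone on (0,1), i.e. either strictly increasing on (0,1) or strictly decreasing on (0,1). -/
open Set

noncomputable section

/-- Injectivity criterion for radial deformations: `u(x) = (η(‖x‖)/‖x‖) • x` is
injective on the punctured open unit ball if and only if `η` is strictly monotone
on `(0,1)`. -/
theorem radial_map_injective_iff_strict_mono {E : Type*}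
    [NormedAddCommGroup E] [NormedSpace ℝ E] [Nontrivial E]
    (η : ℝ → ℝ) (hcont : ContinuousOn η (Set.Ioo 0 1))
    (hpos : ∀ r ∈ Set.Ioo (0 : ℝ) 1, 0 < η r) :
    Set.InjOn (fun x : E => (η ‖x‖ / ‖x‖) • x) (Metric.ball (0 : E) 1 \ {0}) ↔
      (StrictMonoOn η (Set.Ioo 0 1) ∨ StrictAntiOn η (Set.Ioo 0 1)) := by
  constructor
  · intro hinj
    refine ContinuousOn.strictMonoOn_of_injOn_Ioo one_pos hcont ?_
    obtain ⟨v, hv⟩ := exists_ne (0 : E)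
    set e : E := ‖v‖⁻¹ • v with he
    have hnv : (0:ℝ) < ‖v‖ := norm_pos_iff.mpr hv
    have hne : ‖e‖ = 1 := by
      rw [he, norm_smul, norm_inv, norm_norm, inv_mul_cancel₀ hnv.ne']
    intro r hr s hs hrs
    have hmem : ∀ t : ℝ, t ∈ Set.Ioo (0:ℝ) 1 → t • e ∈ Metric.ball (0 : E) 1 \ {0} := by
      intro t ht
      constructor
      · simp [norm_smul, hne, abs_of_pos ht.1, ht.2]
      · simp only [mem_singleton_iff, smul_eq_zero, not_or]
        refine ⟨ht.1.ne', fun h => by simp [h] at hne⟩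
    have hn : ∀ t : ℝ, t ∈ Set.Ioo (0:ℝ) 1 → ‖t • e‖ = t := by
      intro t ht; rw [norm_smul, hne, mul_one, Real.norm_eq_abs, abs_of_pos ht.1]
    have key : (fun x : E => (η ‖x‖ / ‖x‖) • x) (r • e)
        = (fun x : E => (η ‖x‖ / ‖x‖) • x) (s • e) := by
      simp only [hn r hr, hn s hs, smul_smul]
      rw [div_mul_cancel₀ _ hr.1.ne', div_mul_cancel₀ _ hs.1.ne', hrs]
    have := hinj (hmem r hr) (hmem s hs) key
    have := sub_eq_zero.mpr this
    rw [← sub_smul, smul_eq_zero] at this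
    rcases this with h | h
    · exact sub_eq_zero.mp h
    · rw [h] at hne; simp at hne
  · intro hmono x hx y hy hxy
    have hxmem : ‖x‖ ∈ Set.Ioo (0:ℝ) 1 :=
      ⟨norm_pos_iff.mpr hx.2, by simpa using hx.1⟩
    have hymem : ‖y‖ ∈ Set.Ioo (0:ℝ) 1 :=
      ⟨norm_pos_iff.mpr hy.2, by simpa using hy.1⟩
    have hnorm : η ‖x‖ = η ‖y‖ := by
      have h1 : ‖(η ‖x‖ / ‖x‖) • x‖ = η ‖x‖ := by
        rw [norm_smul, Real.norm_eq_abs, abs_of_pos (div_pos (hpos _ hxmem) hxmem.1),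
          div_mul_cancel₀ _ hxmem.1.ne']
      have h2 : ‖(η ‖y‖ / ‖y‖) • y‖ = η ‖y‖ := by
        rw [norm_smul, Real.norm_eq_abs, abs_of_pos (div_pos (hpos _ hymem) hymem.1),
          div_mul_cancel₀ _ hymem.1.ne']
      rw [← h1, ← h2]
      exact congrArg norm hxy
    have hinjη : Set.InjOn η (Set.Ioo 0 1) := by
      rcases hmono with h | h
      · exact h.injOn
      · exact h.injOn
    have hxy' : ‖x‖ = ‖y‖ := hinjη hxmem hymem hnorm
    have hc : η ‖x‖ / ‖x‖ ≠ 0 := (div_pos (hpos _ hxmem) hxmem.1).ne'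
    have : (η ‖x‖ / ‖x‖) • x = (η ‖x‖ / ‖x‖) • y := by
      simpa only [hxy'] using hxy
    exact smul_right_injective E hc this
end
end

section
/- Let N ≥ 2, let E be the N-dimensional Euclidean space (EuclideanSpace ℝ (Fin N)), let x ∈ E with x ≠ 0 and r := ‖x‖, and let η : ℝ → ℝ have derivative η′ at r (HasDerivAt η η′ r). Define u : E → E by u(z) := (η(‖z‖)/‖z‖) · z for z ≠ 0 (with an arbitrary value at 0). Then u is Fréchet differentiable at x with derivative the continuous linear map L given by L(v) = (η(r)/r) · v + ((r·η′ − η(r))/r³) · ⟨x, v⟩ · x for all v ∈ E, and the determinant of L (as a linear endomorphism of E) equals (η(r)/r)^{N−1} · η′. (These are the ν = 2 cases of the derivative formula for radial maps in Proposition A.1 and of the Jacobian formula det Du(x) = (η(|x|)/|x|)^{N−1} η′(|x|) in Corollary A.1.) -/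
/-!
Away from the origin the norm has derivative `⟪x / ‖x‖, ·⟫`, so by the chain and product rules
the radial map `z ↦ φ(‖z‖) • z`, with `φ(t) = η(t) / t`, has derivative
`φ(r) • id + (φ'(r) / r) ⟪x, ·⟫ • x`.
This is `φ(r)` times the identity plus a multiple of the orthogonal projection onto `ℝ x`, hence
diagonal in an orthonormal basis starting with `x / r`: its entries are `φ(r) + r φ'(r) = η'(r)`
once and `φ(r)` the remaining `N - 1` times.
-/

open Module

theorem LinearMap.det_eq_prod_of_apply_basis_eq_smul {R M ι : Type*} [CommRing R] [AddCommGroup M]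
    [Module R M] [Fintype ι] [DecidableEq ι] (b : Basis ι R M) {f : M →ₗ[R] M} (d : ι → R)
    (hf : ∀ i, f (b i) = d i • b i) : f.det = ∏ i, d i := by
  have hdiag : f = Matrix.toLin b b (Matrix.diagonal d) :=
    b.ext fun i => by simp [hf, Matrix.toLin_self, Matrix.diagonal_apply, ite_smul]
  rw [hdiag, LinearMap.det_toLin, Matrix.det_diagonal]

theorem exists_orthonormalBasis_apply_zero_eq {𝕜 E : Type*} [RCLike 𝕜] [NormedAddCommGroup E]
    [InnerProductSpace 𝕜 E] [FiniteDimensional 𝕜 E] {n : ℕ} (hn : finrank 𝕜 E = n + 1) {e : E}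
    (he : ‖e‖ = 1) : ∃ b : OrthonormalBasis (Fin (n + 1)) 𝕜 E, b 0 = e := by
  have hv : Orthonormal 𝕜 (({0} : Set (Fin (n + 1))).domRestrict fun _ => e) :=
    ⟨fun _ => he, fun i j hij => absurd (Subtype.ext (i.2.trans j.2.symm)) hij⟩
  obtain ⟨b, hb⟩ := hv.exists_orthonormalBasis_extension_of_card_eq (by simp [hn])
  exact ⟨b, hb 0 rfl⟩

variable {E : Type*} [NormedAddCommGroup E] [InnerProductSpace ℝ E]

theorem hasFDerivAt_norm {x : E} (hx : x ≠ 0) : HasFDerivAt (‖·‖) (‖x‖⁻¹ • innerSL ℝ x) x := by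
  have hsqrt : HasDerivAt Real.sqrt (2 * ‖x‖)⁻¹ (‖x‖ ^ 2) := by
    simpa [Real.sqrt_sq (norm_nonneg x)] using
      Real.hasDerivAt_sqrt (pow_ne_zero 2 (norm_ne_zero_iff.2 hx))
  have h := hsqrt.comp_hasFDerivAt x (hasStrictFDerivAt_norm_sq x).hasFDerivAt
  rw [show (Real.sqrt ∘ fun z : E => ‖z‖ ^ 2) = (‖·‖) from
    funext fun z => Real.sqrt_sq (norm_nonneg z)] at h
  refine h.congr_fderiv ?_
  rw [two_nsmul, ← two_smul ℝ, smul_smul, mul_inv_rev, inv_mul_cancel_right₀ two_ne_zero]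

theorem HasDerivAt.hasFDerivAt_comp_norm_smul {φ : ℝ → ℝ} {φ' : ℝ} {x : E}
    (hφ : HasDerivAt φ φ' ‖x‖) (hx : x ≠ 0) :
    HasFDerivAt (fun z => φ ‖z‖ • z)
      (φ ‖x‖ • ContinuousLinearMap.id ℝ E + ((φ' / ‖x‖) • innerSL ℝ x).smulRight x) x := by
  have h := (hφ.comp_hasFDerivAt x (hasFDerivAt_norm hx)).smul (hasFDerivAt_id x)
  rwa [smul_smul, ← div_eq_mul_inv] at h

theorem det_smul_id_add_smulRight_innerSL [FiniteDimensional ℝ E] {x : E} (hx : x ≠ 0) (a c : ℝ) :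
    LinearMap.det ((a • ContinuousLinearMap.id ℝ E + (c • innerSL ℝ x).smulRight x :
        E →L[ℝ] E) : E →ₗ[ℝ] E) = a ^ (finrank ℝ E - 1) * (a + c * ‖x‖ ^ 2) := by
  have hr : ‖x‖ ≠ 0 := norm_ne_zero_iff.2 hx
  have : Nontrivial E := ⟨⟨x, 0, hx⟩⟩
  obtain ⟨n, hn⟩ := Nat.exists_eq_add_one.2 (finrank_pos (R := ℝ) (M := E))
  have he : ‖‖x‖⁻¹ • x‖ = 1 := by rw [norm_smul, norm_inv, norm_norm, inv_mul_cancel₀ hr]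
  obtain ⟨b, hb⟩ := exists_orthonormalBasis_apply_zero_eq hn he
  have hxb : x = ‖x‖ • b 0 := by rw [hb, smul_inv_smul₀ hr]
  have hL_apply (v : E) : (a • ContinuousLinearMap.id ℝ E + (c • innerSL ℝ x).smulRight x) v =
      a • v + (c * inner ℝ x v) • x := by simp
  rw [LinearMap.det_eq_prod_of_apply_basis_eq_smul b.toBasis
      (Fin.cons (a + c * ‖x‖ ^ 2) fun _ => a), Fin.prod_cons, Fin.prod_const, hn,
    Nat.add_sub_cancel, mul_comm]
  intro i
  rw [OrthonormalBasis.coe_toBasis, ContinuousLinearMap.coe_coe, hL_apply]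
  cases i using Fin.cases with
  | zero =>
    rw [Fin.cons_zero, hb, real_inner_smul_right, real_inner_self_eq_norm_sq]
    module
  | succ j =>
    rw [Fin.cons_succ, hxb, real_inner_smul_left, b.orthonormal.2 (Fin.succ_ne_zero j).symm]
    simp

theorem radial_map_hasFDerivAt_and_det_general {N : ℕ}
    (x : EuclideanSpace ℝ (Fin N)) (hx : x ≠ 0)
    (η : ℝ → ℝ) (η' : ℝ) (hη : HasDerivAt η η' ‖x‖) :
    ∃ L : EuclideanSpace ℝ (Fin N) →L[ℝ] EuclideanSpace ℝ (Fin N),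
      (∀ v : EuclideanSpace ℝ (Fin N),
        L v = (η ‖x‖ / ‖x‖) • v +
          (((‖x‖ * η' - η ‖x‖) / ‖x‖ ^ 3) * (inner ℝ x v : ℝ)) • x) ∧
      HasFDerivAt (fun z : EuclideanSpace ℝ (Fin N) => (η ‖z‖ / ‖z‖) • z) L x ∧
      LinearMap.det (L : EuclideanSpace ℝ (Fin N) →ₗ[ℝ] EuclideanSpace ℝ (Fin N)) =
        (η ‖x‖ / ‖x‖) ^ (N - 1) * η' := by
  have hr : ‖x‖ ≠ 0 := norm_ne_zero_iff.2 hx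
  refine ⟨(η ‖x‖ / ‖x‖) • ContinuousLinearMap.id ℝ _ +
    (((‖x‖ * η' - η ‖x‖) / ‖x‖ ^ 3) • innerSL ℝ x).smulRight x, fun v => by simp, ?_, ?_⟩
  · have hφ : HasDerivAt (fun t => η t / t) ((‖x‖ * η' - η ‖x‖) / ‖x‖ ^ 3 * ‖x‖) ‖x‖ :=
      (hη.div (hasDerivAt_id' _) hr).congr_deriv (by field_simp)
    simpa only [mul_div_cancel_right₀ _ hr] using hφ.hasFDerivAt_comp_norm_smul hx
  · rw [det_smul_id_add_smulRight_innerSL hx, finrank_euclideanSpace_fin]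
    congr 1
    field_simp
    ring

/-- Derivative and Jacobian determinant of a radial map `u(z) = (η(‖z‖)/‖z‖) • z`
at a point `x ≠ 0`: the derivative is
`v ↦ (η(r)/r) • v + ((r η' − η(r))/r³) ⟨x, v⟩ • x` with `r = ‖x‖`, and its
determinant equals `(η(r)/r)^(N−1) · η'`. -/
theorem radial_map_hasFDerivAt_and_det {N : ℕ} (hN : 2 ≤ N)
    (x : EuclideanSpace ℝ (Fin N)) (hx : x ≠ 0)
    (η : ℝ → ℝ) (η' : ℝ) (hη : HasDerivAt η η' ‖x‖) :
    ∃ L : EuclideanSpace ℝ (Fin N) →L[ℝ] EuclideanSpace ℝ (Fin N),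
      (∀ v : EuclideanSpace ℝ (Fin N),
        L v = (η ‖x‖ / ‖x‖) • v +
          (((‖x‖ * η' - η ‖x‖) / ‖x‖ ^ 3) * (inner ℝ x v : ℝ)) • x) ∧
      HasFDerivAt (fun z : EuclideanSpace ℝ (Fin N) => (η ‖z‖ / ‖z‖) • z) L x ∧
      LinearMap.det (L : EuclideanSpace ℝ (Fin N) →ₗ[ℝ] EuclideanSpace ℝ (Fin N)) =
        (η ‖x‖ / ‖x‖) ^ (N - 1) * η' :=
  radial_map_hasFDerivAt_and_det_general x hx η η' hη
end

section
/- Let Ω ⊆ ℝ^N be measurable with finite Lebesgue measure. For each n let f_n ∈ L¹(Ω) be measurable with f_n(x) > 0 for almost every x ∈ Ω, and let h ∈ L¹(Ω) be such that ∫_E f_n → ∫_E h as n → ∞ for every measurable set E ⊆ Ω (in particular, this holds if f_n converges to h weakly in L¹(Ω)). Let γ : ℝ → [0, +∞] be a Borel function such that γ(t) → +∞ as t → 0⁺ (limit along the filter of positive reals tending to 0), and assume sup_n ∫⁻_Ω γ(f_n(x)) dx < +∞. Then h(x) > 0 for almost every x ∈ Ω. -/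
/-!
Since `γ ≥ M` on `(0, δ)` for small `δ`, the bound `∫ γ(f n) ≤ C` gives `|{f n < δ}| ≤ C / M`
uniformly in `n`: the sublevel sets near `0` are uniformly small. On `E = {h ≤ 0}` the integrals
`∫_E f n` tend to `∫_E h ≤ 0`, so by Chebyshev `|E ∩ {f n ≥ δ}| ≤ (∫_E f n) / δ → 0`, and `E` is
covered, up to a vanishing error, by these small sets.
-/

open MeasureTheory Filter Topology Set
open scoped ENNReal

namespace MeasureTheory

variable {α : Type*} [MeasurableSpace α] {μ : Measure α}

theorem mul_measure_setOf_lt_le_lintegral_comp {γ : ℝ → ℝ≥0∞} {f : α → ℝ} {M : ℝ≥0∞} {δ : ℝ}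
    (hf : AEMeasurable f μ) (hpos : ∀ᵐ x ∂μ, 0 < f x) (hγ : ∀ t ∈ Ioo 0 δ, M ≤ γ t) :
    M * μ {x | f x < δ} ≤ ∫⁻ x, γ (f x) ∂μ := by
  have hS : NullMeasurableSet {x | f x < δ} μ := nullMeasurableSet_lt hf aemeasurable_const
  calc M * μ {x | f x < δ} = ∫⁻ _ in {x | f x < δ}, M ∂μ := (setLIntegral_const _ M).symm
    _ ≤ ∫⁻ x in {x | f x < δ}, γ (f x) ∂μ := by
      refine lintegral_mono_ae ?_
      filter_upwards [ae_restrict_mem₀ hS, ae_restrict_of_ae hpos] with x hxδ hx0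
      exact hγ _ ⟨hx0, hxδ⟩
    _ ≤ ∫⁻ x, γ (f x) ∂μ := setLIntegral_le_lintegral _ _

theorem exists_forall_measure_setOf_lt_le_of_iSup_lintegral_comp_lt_top {γ : ℝ → ℝ≥0∞}
    {f : ℕ → α → ℝ} (hf : ∀ n, AEMeasurable (f n) μ) (hpos : ∀ n, ∀ᵐ x ∂μ, 0 < f n x)
    (hγ : Tendsto γ (𝓝[>] 0) (𝓝 ⊤)) (hbound : ⨆ n, ∫⁻ x, γ (f n x) ∂μ < ⊤)
    {ε : ℝ≥0∞} (hε : 0 < ε) : ∃ δ > 0, ∀ n, μ {x | f n x < δ} ≤ ε := by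
  obtain ⟨M, hM⟩ := ENNReal.exists_nat_mul_gt hε.ne' hbound.ne
  obtain ⟨δ, hδ, hγM⟩ := mem_nhdsGT_iff_exists_Ioo_subset.1
    (hγ.eventually (eventually_gt_nhds (ENNReal.natCast_lt_top M)))
  refine ⟨δ, hδ, fun n => le_of_not_gt fun hlt => hM.not_ge ?_⟩
  calc ⨆ n, ∫⁻ x, γ (f n x) ∂μ ≥ ∫⁻ x, γ (f n x) ∂μ := le_iSup (fun n => ∫⁻ x, γ (f n x) ∂μ) n
    _ ≥ M * μ {x | f n x < δ} :=
      mul_measure_setOf_lt_le_lintegral_comp (hf n) (hpos n) fun t ht => (hγM ht).le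
    _ ≥ M * ε := by gcongr

theorem measure_le_measure_setOf_lt_add_setIntegral_div {f : α → ℝ} {E : Set α} {δ : ℝ}
    (hf : IntegrableOn f E μ) (hf_nonneg : 0 ≤ᵐ[μ.restrict E] f) (hδ : 0 < δ) :
    μ E ≤ μ {x | f x < δ} + ENNReal.ofReal (∫ x in E, f x ∂μ) / ENNReal.ofReal δ := by
  have hChebyshev : μ.restrict E {x | δ ≤ f x} ≤
      ENNReal.ofReal (∫ x in E, f x ∂μ) / ENNReal.ofReal δ := by
    rw [ofReal_integral_eq_lintegral_ofReal hf hf_nonneg]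
    refine le_trans (measure_mono fun x hx => ENNReal.ofReal_le_ofReal hx) ?_
    exact meas_ge_le_lintegral_div hf.aemeasurable.ennreal_ofReal
      (ENNReal.ofReal_pos.2 hδ).ne' ENNReal.ofReal_ne_top
  calc μ E = μ.restrict E ({x | f x < δ} ∪ {x | δ ≤ f x}) := by
        rw [← Measure.restrict_apply_univ]
        congr 1
        ext x
        simp [lt_or_ge]
    _ ≤ μ.restrict E {x | f x < δ} + μ.restrict E {x | δ ≤ f x} := measure_union_le _ _
    _ ≤ _ := add_le_add (Measure.restrict_le_self _) hChebyshev

theorem ae_pos_of_tendsto_setIntegral {f : ℕ → α → ℝ} {h : α → ℝ}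
    (hf : ∀ n, Integrable (f n) μ) (hf_nonneg : ∀ n, 0 ≤ᵐ[μ] f n) (hh : AEMeasurable h μ)
    (hconv : ∀ E, MeasurableSet E →
      Tendsto (fun n => ∫ x in E, f n x ∂μ) atTop (𝓝 (∫ x in E, h x ∂μ)))
    (hsmall : ∀ ε > 0, ∃ δ > 0, ∀ n, μ {x | f n x < δ} ≤ ε) :
    ∀ᵐ x ∂μ, 0 < h x := by
  set E := {x | hh.mk h x ≤ 0}
  have hE : MeasurableSet E := measurableSet_le hh.measurable_mk measurable_const
  have hE_int : ∫ x in E, h x ∂μ ≤ 0 := by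
    rw [integral_congr_ae (ae_restrict_of_ae hh.ae_eq_mk)]
    exact setIntegral_nonpos hE fun x hx => hx
  have hμE : μ E = 0 := by
    refine le_antisymm (le_of_forall_gt_imp_ge_of_dense fun ε hε => ?_) zero_le
    obtain ⟨δ, hδ, hsub⟩ := hsmall ε hε
    have hlim : Tendsto (fun n => ε + ENNReal.ofReal (∫ x in E, f n x ∂μ) / ENNReal.ofReal δ)
        atTop (𝓝 ε) := by
      have := tendsto_const_nhds (x := ε) |>.add <|
        ENNReal.Tendsto.div_const ((ENNReal.continuous_ofReal.tendsto _).comp (hconv E hE))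
          (Or.inr (ENNReal.ofReal_pos.2 hδ).ne')
      simpa [ENNReal.ofReal_of_nonpos hE_int] using this
    refine ge_of_tendsto' hlim fun n => ?_
    calc μ E ≤ μ {x | f n x < δ} + _ := measure_le_measure_setOf_lt_add_setIntegral_div
          (hf n).integrableOn (ae_restrict_of_ae (hf_nonneg n)) hδ
      _ ≤ _ := by gcongr; exact hsub n
  filter_upwards [hh.ae_eq_mk, measure_eq_zero_iff_ae_notMem.1 hμE] with x hx hxE
  rw [hx]
  exact lt_of_not_ge hxE

end MeasureTheory

theorem positivity_of_weak_limit_general {N : ℕ}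
    (Ω : Set (EuclideanSpace ℝ (Fin N))) (hΩ : MeasurableSet Ω)
    (f : ℕ → EuclideanSpace ℝ (Fin N) → ℝ)
    (hint : ∀ n, IntegrableOn (f n) Ω volume)
    (hpos : ∀ n, ∀ᵐ x ∂(volume.restrict Ω), 0 < f n x)
    (h : EuclideanSpace ℝ (Fin N) → ℝ) (hh : IntegrableOn h Ω volume)
    (hconv : ∀ E : Set (EuclideanSpace ℝ (Fin N)), E ⊆ Ω → MeasurableSet E →
      Tendsto (fun n => ∫ x in E, f n x) atTop (𝓝 (∫ x in E, h x)))
    (γ : ℝ → ℝ≥0∞)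
    (hγlim : Tendsto γ (𝓝[>] (0 : ℝ)) (𝓝 ⊤))
    (hbound : (⨆ n, ∫⁻ x in Ω, γ (f n x)) < ⊤) :
    ∀ᵐ x ∂(volume.restrict Ω), 0 < h x := by
  have hconv_restrict : ∀ E, MeasurableSet E → Tendsto (fun n => ∫ x in E, f n x ∂volume.restrict Ω)
      atTop (𝓝 (∫ x in E, h x ∂volume.restrict Ω)) := fun E hE => by
    simpa only [Measure.restrict_restrict hE] using hconv (E ∩ Ω) inter_subset_right (hE.inter hΩ)
  exact ae_pos_of_tendsto_setIntegral hint (fun n => (hpos n).mono fun _ hx => hx.le)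
    hh.aemeasurable hconv_restrict
    fun _ hε => exists_forall_measure_setOf_lt_le_of_iSup_lintegral_comp_lt_top
      (fun n => (hint n).aemeasurable) hpos hγlim hbound hε

/-- Positivity of the weak `L¹` limit of positive Jacobians under a coercivity bound:
if `γ(t) → +∞` as `t → 0⁺` and `sup_n ∫ γ(f_n) < ∞`, then the setwise limit `h` of the
`f_n` is positive almost everywhere. -/
theorem positivity_of_weak_limit {N : ℕ}
    (Ω : Set (EuclideanSpace ℝ (Fin N))) (hΩ : MeasurableSet Ω) (hΩfin : volume Ω < ⊤)
    (f : ℕ → EuclideanSpace ℝ (Fin N) → ℝ)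
    (hmeas : ∀ n, Measurable (f n))
    (hint : ∀ n, IntegrableOn (f n) Ω volume)
    (hpos : ∀ n, ∀ᵐ x ∂(volume.restrict Ω), 0 < f n x)
    (h : EuclideanSpace ℝ (Fin N) → ℝ) (hh : IntegrableOn h Ω volume)
    (hconv : ∀ E : Set (EuclideanSpace ℝ (Fin N)), E ⊆ Ω → MeasurableSet E →
      Tendsto (fun n => ∫ x in E, f n x) atTop (𝓝 (∫ x in E, h x)))
    (γ : ℝ → ℝ≥0∞) (hγ : Measurable γ)
    (hγlim : Tendsto γ (𝓝[>] (0 : ℝ)) (𝓝 ⊤))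
    (hbound : (⨆ n, ∫⁻ x in Ω, γ (f n x)) < ⊤) :
    ∀ᵐ x ∂(volume.restrict Ω), 0 < h x :=
  positivity_of_weak_limit_general Ω hΩ f hint hpos h hh hconv γ hγlim hbound
end
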